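/- arXiv:2412.19506 — 10 statements merged into one kernel-verified Lean document; each statement's English description precedes it below -/
import Mathlib

section
/- Let N be a finite set with |N| ≥ 3 and let w and w' be weights. If the constrained equal awards rule with weight w, CEA^w, is strategy-free^{w'}, then w = w'. -/
open Finset MeasureTheory

variable {N : Type*}

/-- A rule for claims problems: nonnegative awards, balance when the endowment is short,
full honoring when the endowment suffices, and awards bounded by claims. -/
def IsRule [Fintype N] (z : ℝ → (N → ℝ) → N → ℝ) : Prop :=
  ∀ (E : ℝ) (c : N → ℝ), 0 ≤ E → (∀ i, 0 ≤ c i) →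
    (∀ i, 0 ≤ z E c i) ∧
    (E < ∑ i, c i → ∑ i, z E c i = E) ∧
    ((∑ i, c i) ≤ E → z E c = c) ∧
    (∀ i, z E c i ≤ c i)

/-- A weight: strictly positive components summing to one. -/
def IsWeight [Fintype N] (w : N → ℝ) : Prop :=
  (∀ i, 0 < w i) ∧ (∑ i, w i) = 1

/-- Strategy-freedom with respect to a weight `w`. -/
def StrategyFree [Fintype N] [DecidableEq N] (z : ℝ → (N → ℝ) → N → ℝ)
    (w : N → ℝ) : Prop :=
  ∀ (i : N) (lam E ci : ℝ), 0 ≤ lam → lam ≤ E →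
    E - lam * ∑ j ∈ univ.erase i, w j ≤ ci →
    ∀ j, j ≠ i → z E (Function.update (fun k => lam * w k) i ci) j = lam * w j

/-- The vector `α(z)`. -/
noncomputable def alphaVec [Fintype N] (z : ℝ → (N → ℝ) → N → ℝ) (i : N) : ℝ :=
  sInf {ρ : ℝ | 0 ≤ ρ ∧ ∀ (E : ℝ) (c : N → ℝ), 0 ≤ E → (∀ k, 0 ≤ c k) →
    E ≤ ∑ k, c k → min (c i) (ρ * E) ≤ z E c i}

/-- `z` is the constrained equal awards rule with weight `w`. -/
def IsCEA [Fintype N] (w : N → ℝ) (z : ℝ → (N → ℝ) → N → ℝ) : Prop :=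
  ∀ (E : ℝ) (c : N → ℝ), 0 ≤ E → (∀ i, 0 ≤ c i) →
    ∃ lam : ℝ, 0 ≤ lam ∧ (∀ i, z E c i = min (c i) (lam * w i)) ∧
      (∑ i, z E c i) = min E (∑ i, c i)

/-- `z` is the rule `CEA^w_κ`. -/
def IsCEAk [Fintype N] (w : N → ℝ) (κ : ℝ) (z : ℝ → (N → ℝ) → N → ℝ) : Prop :=
  ∀ (E : ℝ) (c : N → ℝ), 0 ≤ E → (∀ i, 0 ≤ c i) →
    ∃ lam : ℝ, 0 ≤ lam ∧
      (∀ i, z E c i = min (c i) (lam * (w i * (c i / w i) ^ (-κ)))) ∧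
      (∑ i, z E c i) = min E (∑ i, c i)

/-- `z` is the separable directional rule `P^u`. -/
def IsSepDir [Fintype N] (u : N → ℝ → ℝ) (z : ℝ → (N → ℝ) → N → ℝ) : Prop :=
  (∀ i, u i 0 = 0) ∧ (∀ i x, 0 < x → 0 < u i x) ∧
  ∀ (E : ℝ) (c : N → ℝ), 0 ≤ E → (∀ i, 0 ≤ c i) →
    ∃ lam : ℝ, 0 ≤ lam ∧ (∀ i, z E c i = min (c i) (lam * u i (c i))) ∧
      (∑ i, z E c i) = min E (∑ i, c i)

/-- Claims monotonicity. -/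
def ClaimsMonotonic [Fintype N] [DecidableEq N] (z : ℝ → (N → ℝ) → N → ℝ) : Prop :=
  ∀ (E : ℝ) (c : N → ℝ), 0 ≤ E → (∀ i, 0 ≤ c i) → E ≤ ∑ i, c i →
    ∀ (i : N) (ci' : ℝ), c i < ci' →
      z E c i ≤ z E (Function.update c i ci') i

/-- Homogeneity. -/
def Homogeneous [Fintype N] (z : ℝ → (N → ℝ) → N → ℝ) : Prop :=
  ∀ (E : ℝ) (c : N → ℝ), 0 ≤ E → (∀ i, 0 ≤ c i) → E ≤ ∑ i, c i →
    ∀ lam : ℝ, 0 < lam →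
      z (lam * E) (fun i => lam * c i) = fun i => lam * z E c i

/-- `(u, v)` is an `(i, j)`-bad pair of weights. -/
def IsBadPair [Fintype N] [DecidableEq N] (i j : N) (u v : N → ℝ) : Prop :=
  u ≠ v ∧
  (∃ μ : ℝ, 0 < μ ∧ ∀ k, k ≠ i → k ≠ j → u k = μ * v k) ∧
  u i * (∑ k ∈ (univ.erase i).erase j, v k)
    < v i * (∑ k ∈ (univ.erase i).erase j, u k) ∧
  v j * (∑ k ∈ (univ.erase i).erase j, u k)
    < u j * (∑ k ∈ (univ.erase i).erase j, v k)

/-- The relation `D` between wellformed problems and weights. -/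
def DRel [Fintype N] [DecidableEq N] (E : ℝ) (c : N → ℝ) (w : N → ℝ) : Prop :=
  ∃ (i : N) (ci' : ℝ), ci' < c i ∧
    (∃ lam : ℝ, 0 ≤ lam ∧ Function.update c i ci' = fun k => lam * w k) ∧
    (∑ j ∈ univ.erase i, c j) + ci' ≤ E

/-- Euclidean norm on `ℝ^N`. -/
noncomputable def pnorm [Fintype N] (f : N → ℝ) : ℝ :=
  Real.sqrt (∑ j, (f j) ^ 2)

/-- Euclidean norm on `ℝ^(N \ {i})`. -/
noncomputable def pnormErase [Fintype N] [DecidableEq N] (i : N) (f : N → ℝ) : ℝ :=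
  Real.sqrt (∑ j ∈ univ.erase i, (f j) ^ 2)

/-- Continuous strategy-freedom with respect to a weight `w`. -/
def ContStrategyFree [Fintype N] [DecidableEq N] (z : ℝ → (N → ℝ) → N → ℝ)
    (w : N → ℝ) : Prop :=
  ∀ ε : ℝ, 0 < ε → ∃ δ : ℝ, 0 < δ ∧
    ∀ (E : ℝ) (c : N → ℝ) (i : N) (ci' lam : ℝ),
      0 < E → (∀ k, 0 ≤ c k) → 0 ≤ ci' → 0 ≤ lam → lam ≤ E →
      E ≤ (∑ j ∈ univ.erase i, c j) + ci' →
      pnormErase i (fun j => lam * w j - c j) < δ →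
      pnormErase i (fun j => z E (Function.update c i ci') j - c j) < ε

/-- Uniform claims continuity. -/
def UnifClaimsCont [Fintype N] (z : ℝ → (N → ℝ) → N → ℝ) : Prop :=
  ∀ ε : ℝ, 0 < ε → ∃ δ : ℝ, 0 < δ ∧
    ∀ (E : ℝ) (c d : N → ℝ), 0 < E → (∀ k, 0 ≤ c k) → (∀ k, 0 ≤ d k) →
      pnorm (fun j => c j - d j) < δ → pnorm (fun j => z E c j - z E d j) < ε

/-- Nash equilibrium of a family of payoff functions, within nonnegative strategies. -/
def IsNash [Fintype N] [DecidableEq N] (π : N → (N → ℝ) → ℝ) (c : N → ℝ) : Prop :=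
  (∀ i, 0 ≤ c i) ∧ ∀ (i : N) (x : ℝ), 0 ≤ x → π i (Function.update c i x) ≤ π i c

/-- If `CEA^w` is strategy-free with respect to a weight `w'`, then
`w = w'`. -/
theorem stmt2 [Fintype N] [DecidableEq N] (hN : 3 ≤ Fintype.card N)
    (w w' : N → ℝ) (hw : IsWeight w) (hw' : IsWeight w')
    (z : ℝ → (N → ℝ) → N → ℝ) (hz : IsRule z) (hcea : IsCEA w z)
    (hsf : StrategyFree z w') :
    w = w' := by
  obtain ⟨hwpos, hwsum⟩ := hw
  obtain ⟨hw'pos, hw'sum⟩ := hw'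
  have key : ∀ i j : N, w' j * w i ≤ w' i * w j := by
    intro i j
    rcases eq_or_ne j i with rfl | hji
    · exact le_of_eq (by ring)
    set c : N → ℝ := Function.update (fun k => 1 * w' k) i (w' i + 1) with hc
    have hci : c i = w' i + 1 := by simp [hc]
    have hcj : ∀ k, k ≠ i → c k = w' k := by
      intro k hk; simp [hc, Function.update_of_ne hk]
    have hc0 : ∀ k, 0 ≤ c k := by
      intro k
      rcases eq_or_ne k i with rfl | hk
      · rw [hci]; linarith [hw'pos k]
      · rw [hcj k hk]; exact (hw'pos k).le
    have herase : ∑ k ∈ univ.erase i, w' k = 1 - w' i := by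
      have := Finset.add_sum_erase univ w' (Finset.mem_univ i)
      linarith [this, hw'sum]
    have hsum : ∑ k, c k = 2 := by
      have h1 : ∑ k, c k = c i + ∑ k ∈ univ.erase i, c k :=
        (Finset.add_sum_erase univ c (Finset.mem_univ i)).symm
      have h2 : ∑ k ∈ univ.erase i, c k = ∑ k ∈ univ.erase i, w' k :=
        Finset.sum_congr rfl (fun k hk => hcj k (Finset.ne_of_mem_erase hk))
      rw [h1, h2, hci, herase]; ring
    have hzj : ∀ k, k ≠ i → z 1 c k = w' k := by
      intro k hk
      have := hsf i 1 1 (w' i + 1) (by norm_num) le_rfl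
        (by rw [herase]; linarith [hw'pos i]) k hk
      simpa [hc] using this
    obtain ⟨hznn, hbal, _, hle⟩ := hz 1 c (by norm_num) hc0
    have htot : ∑ k, z 1 c k = 1 := hbal (by rw [hsum]; norm_num)
    have hzi : z 1 c i = w' i := by
      have h1 : ∑ k, z 1 c k = z 1 c i + ∑ k ∈ univ.erase i, z 1 c k :=
        (Finset.add_sum_erase univ _ (Finset.mem_univ i)).symm
      have h2 : ∑ k ∈ univ.erase i, z 1 c k = ∑ k ∈ univ.erase i, w' k :=
        Finset.sum_congr rfl (fun k hk => hzj k (Finset.ne_of_mem_erase hk))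
      rw [htot, h2, herase] at h1
      linarith
    obtain ⟨μ, hμ0, hμ, _⟩ := hcea 1 c (by norm_num) hc0
    have hμi : μ * w i = w' i := by
      have h := hμ i
      rw [hzi, hci] at h
      rcases le_total (μ * w i) (w' i + 1) with h' | h'
      · rw [min_eq_right h'] at h; linarith
      · rw [min_eq_left h'] at h; linarith
    have hμj : w' j ≤ μ * w j := by
      have h := hμ j
      rw [hzj j hji, hcj j hji] at h
      rcases le_total (w' j) (μ * w j) with h' | h'
      · exact h'
      · rw [min_eq_right h'] at h; linarith
    calc w' j * w i ≤ (μ * w j) * w i := by nlinarith [hwpos i]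
      _ = (μ * w i) * w j := by ring
      _ = w' i * w j := by rw [hμi]
  have keq : ∀ i j : N, w' j * w i = w' i * w j :=
    fun i j => le_antisymm (key i j) (by linarith [key j i])
  funext j
  have h1 : ∑ i, w' j * w i = ∑ i, w' i * w j :=
    Finset.sum_congr rfl (fun i _ => keq i j)
  rw [← Finset.sum_mul, ← Finset.mul_sum, hwsum, hw'sum] at h1
  linarith
end

section
/- Let N be a finite set with |N| ≥ 3, let i, j ∈ N be distinct, and let (u, v) be an (i,j)-bad pair of weights. Then there is no rule that is both strategy-free^u and strategy-free^v. -/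
open Finset MeasureTheory

variable {N : Type*}

/-- For an `(i,j)`-bad pair of weights `(u, v)`, no rule is both
strategy-free with respect to `u` and strategy-free with respect to `v`. -/
theorem stmt7 [Fintype N] [DecidableEq N] (hN : 3 ≤ Fintype.card N)
    (i j : N) (hij : i ≠ j) (u v : N → ℝ) (hu : IsWeight u) (hv : IsWeight v)
    (hbad : IsBadPair i j u v) :
    ¬ ∃ z : ℝ → (N → ℝ) → N → ℝ,
        IsRule z ∧ StrategyFree z u ∧ StrategyFree z v := by

  rintro ⟨z, hz, hsfu, hsfv⟩
  obtain ⟨hupos, husum⟩ := hu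
  obtain ⟨hvpos, hvsum⟩ := hv
  obtain ⟨-, ⟨μ, hμpos, hμ⟩, hbad1, hbad2⟩ := hbad
  have hjmem : j ∈ univ.erase i := by simp [Ne.symm hij]
  have himem : i ∈ univ.erase j := by simp [hij]
  have hScard : 1 ≤ ((univ.erase i).erase j).card := by
    rw [Finset.card_erase_of_mem hjmem, Finset.card_erase_of_mem (Finset.mem_univ i),
      Finset.card_univ]
    omega
  have hSne : ((univ.erase i).erase j).Nonempty := Finset.card_pos.mp (by omega)
  have hSv : 0 < ∑ k ∈ (univ.erase i).erase j, v k :=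
    Finset.sum_pos (fun k _ => hvpos k) hSne
  have hSuv : ∑ k ∈ (univ.erase i).erase j, u k
      = μ * ∑ k ∈ (univ.erase i).erase j, v k := by
    rw [Finset.mul_sum]
    refine Finset.sum_congr rfl fun k hk => ?_
    simp only [Finset.mem_erase, Finset.mem_univ] at hk
    exact hμ k hk.2.1 hk.1
  have hui : u i < μ * v i := by
    have h : u i * ∑ k ∈ (univ.erase i).erase j, v k
        < (μ * v i) * ∑ k ∈ (univ.erase i).erase j, v k := by
      calc u i * ∑ k ∈ (univ.erase i).erase j, v k
          < v i * ∑ k ∈ (univ.erase i).erase j, u k := hbad1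
        _ = (μ * v i) * ∑ k ∈ (univ.erase i).erase j, v k := by rw [hSuv]; ring
    exact lt_of_mul_lt_mul_right h hSv.le
  have hvj : μ * v j < u j := by
    have h : (μ * v j) * ∑ k ∈ (univ.erase i).erase j, v k
        < u j * ∑ k ∈ (univ.erase i).erase j, v k := by
      calc (μ * v j) * ∑ k ∈ (univ.erase i).erase j, v k
          = v j * ∑ k ∈ (univ.erase i).erase j, u k := by rw [hSuv]; ring
        _ < u j * ∑ k ∈ (univ.erase i).erase j, v k := hbad2
    exact lt_of_mul_lt_mul_right h hSv.le
  have herasei : ∑ k ∈ univ.erase i, u k = u j + ∑ k ∈ (univ.erase i).erase j, u k :=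
    (Finset.add_sum_erase _ u hjmem).symm
  have hsumu : ∑ k, u k = u i + (u j + ∑ k ∈ (univ.erase i).erase j, u k) := by
    rw [← Finset.add_sum_erase _ u (Finset.mem_univ i), herasei]
  have heraseju : (univ.erase j).erase i = (univ.erase i).erase j := Finset.erase_right_comm
  have herasej : ∑ k ∈ univ.erase j, v k = v i + ∑ k ∈ (univ.erase i).erase j, v k := by
    rw [← heraseju]
    exact (Finset.add_sum_erase _ v himem).symm
  have hsumv : ∑ k, v k = v i + (v j + ∑ k ∈ (univ.erase i).erase j, v k) := by
    rw [← Finset.add_sum_erase _ v (Finset.mem_univ j), ← Finset.add_sum_erase _ v himem,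
      heraseju]
    ring
  -- T := μ * v i + u j + ∑ S u
  have hT1 : 1 < μ * v i + (u j + ∑ k ∈ (univ.erase i).erase j, u k) := by
    rw [← husum, hsumu]; linarith
  have hTμ : μ < μ * v i + (u j + ∑ k ∈ (univ.erase i).erase j, u k) := by
    have h1 : μ * (v i + (v j + ∑ k ∈ (univ.erase i).erase j, v k)) = μ := by
      rw [← hsumv, hvsum, mul_one]
    nlinarith [hSuv]
  set E : ℝ := max 1 μ with hE
  have hE1 : (1 : ℝ) ≤ E := le_max_left _ _
  have hEμ : μ ≤ E := le_max_right _ _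
  have hEpos : (0 : ℝ) < E := lt_of_lt_of_le one_pos hE1
  have hET : E < μ * v i + (u j + ∑ k ∈ (univ.erase i).erase j, u k) := max_lt hT1 hTμ
  set c : N → ℝ := Function.update (fun k => 1 * u k) i (μ * v i) with hc
  have hcnn : ∀ k, 0 ≤ c k := by
    intro k
    rcases eq_or_ne k i with rfl | hk
    · rw [hc, Function.update_self]
      exact mul_nonneg hμpos.le (hvpos k).le
    · rw [hc, Function.update_of_ne hk, one_mul]
      exact (hupos k).le
  have hceq : Function.update (fun k => μ * v k) j (u j) = c := by
    funext k
    rcases eq_or_ne k j with rfl | hkj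
    · rw [Function.update_self, hc, Function.update_of_ne (Ne.symm hij), one_mul]
    · rw [Function.update_of_ne hkj]
      rcases eq_or_ne k i with rfl | hki
      · rw [hc, Function.update_self]
      · rw [hc, Function.update_of_ne hki, hμ k hki hkj]; ring
  have hzu : ∀ k, k ≠ i → z E c k = 1 * u k := by
    intro k hk
    refine hsfu i 1 E (μ * v i) zero_le_one hE1 ?_ k hk
    rw [herasei]
    linarith
  have hzv : z E c i = μ * v i := by
    have h := hsfv j μ E (u j) hμpos.le hEμ ?_ i hij
    · rwa [hceq] at h
    · rw [herasej]
      nlinarith [hSuv]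
  have hsumc : ∑ k, c k = μ * v i + (u j + ∑ k ∈ (univ.erase i).erase j, u k) := by
    rw [← Finset.add_sum_erase _ c (Finset.mem_univ i)]
    congr 1
    · rw [hc, Function.update_self]
    · rw [herasei.symm]
      refine Finset.sum_congr rfl fun k hk => ?_
      rw [hc, Function.update_of_ne (Finset.mem_erase.mp hk).1, one_mul]
  have hbalance : ∑ k, z E c k = E := by
    refine (hz E c hEpos.le hcnn).2.1 ?_
    rw [hsumc]; exact hET
  have hsumz : ∑ k, z E c k = μ * v i + (u j + ∑ k ∈ (univ.erase i).erase j, u k) := by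
    rw [← Finset.add_sum_erase _ _ (Finset.mem_univ i), hzv]
    congr 1
    rw [herasei.symm]
    refine Finset.sum_congr rfl fun k hk => ?_
    rw [hzu k (Finset.mem_erase.mp hk).1, one_mul]
  linarith
end

section
/- Let N be a finite set with |N| ≥ 3, let w be a weight, and let κ ≥ 0. Then CEA^w_κ is well defined, is a separable directional rule (namely CEA^w_κ = P^u with u_i(x) = w_i (x/w_i)^{−κ} for x > 0 and u_i(0) = 0), is strategy-free^w, and is homogeneous. -/
open Finset MeasureTheory

variable {N : Type*}

section Aux

variable [Fintype N]

private lemma sum_min_eq_of_sum_eq {c' v : N → ℝ} (hv : ∀ i, 0 ≤ v i) {a b : ℝ}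
    (hsum : ∑ i, min (c' i) (a * v i) = ∑ i, min (c' i) (b * v i)) (i : N) :
    min (c' i) (a * v i) = min (c' i) (b * v i) := by
  rcases le_total a b with hab | hab
  · have hle : ∀ j ∈ Finset.univ, min (c' j) (a * v j) ≤ min (c' j) (b * v j) :=
      fun j _ => min_le_min le_rfl (mul_le_mul_of_nonneg_right hab (hv j))
    exact (Finset.sum_eq_sum_iff_of_le hle).1 hsum i (Finset.mem_univ i)
  · have hle : ∀ j ∈ Finset.univ, min (c' j) (b * v j) ≤ min (c' j) (a * v j) :=
      fun j _ => min_le_min le_rfl (mul_le_mul_of_nonneg_right hab (hv j))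
    exact ((Finset.sum_eq_sum_iff_of_le hle).1 hsum.symm i (Finset.mem_univ i)).symm

private lemma exists_ceak_lam (w : N → ℝ) (hw : IsWeight w) (κ : ℝ)
    (E : ℝ) (c : N → ℝ) (hE : 0 ≤ E) (hc : ∀ i, 0 ≤ c i) :
    ∃ lam : ℝ, 0 ≤ lam ∧
      ∑ i, min (c i) (lam * (w i * (c i / w i) ^ (-κ))) = min E (∑ i, c i) := by
  set v : N → ℝ := fun i => w i * (c i / w i) ^ (-κ) with hv
  have hvnn : ∀ i, 0 ≤ v i := fun i =>
    mul_nonneg (hw.1 i).le (Real.rpow_nonneg (div_nonneg (hc i) (hw.1 i).le) _)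
  set f : ℝ → ℝ := fun lam => ∑ i, min (c i) (lam * v i) with hf
  have hfc : Continuous f :=
    continuous_finset_sum _ fun i _ => continuous_const.min (continuous_id.mul continuous_const)
  set L : ℝ := ∑ i, c i / v i with hL
  have hLnn : 0 ≤ L := Finset.sum_nonneg fun i _ => div_nonneg (hc i) (hvnn i)
  have hf0 : f 0 = 0 := by
    simp only [hf, zero_mul]
    exact Finset.sum_eq_zero fun i _ => min_eq_right (hc i)
  have hfL : f L = ∑ i, c i := by
    refine Finset.sum_congr rfl fun i _ => ?_
    rcases (hc i).eq_or_lt with h0 | h0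
    · rw [← h0]
      exact min_eq_left (mul_nonneg hLnn (hvnn i))
    · have hvpos : 0 < v i := mul_pos (hw.1 i) (Real.rpow_pos_of_pos (div_pos h0 (hw.1 i)) _)
      have hterm : c i / v i ≤ L :=
        Finset.single_le_sum (fun j _ => div_nonneg (hc j) (hvnn j)) (Finset.mem_univ i)
      exact min_eq_left (by rw [div_le_iff₀ hvpos] at hterm; linarith)
  have hT0 : 0 ≤ min E (∑ i, c i) :=
    le_min hE (Finset.sum_nonneg fun i _ => hc i)
  have hTL : min E (∑ i, c i) ≤ f L := hfL ▸ min_le_right _ _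
  have := intermediate_value_Icc hLnn hfc.continuousOn
    (Set.mem_Icc.2 ⟨hf0.le.trans hT0, hTL⟩)
  obtain ⟨lam, hmem, hlam⟩ := this
  exact ⟨lam, hmem.1, hlam⟩

noncomputable def ceakZ (w : N → ℝ) (hw : IsWeight w) (κ : ℝ) : ℝ → (N → ℝ) → N → ℝ :=
  fun E c =>
    if h : 0 ≤ E ∧ ∀ i, 0 ≤ c i then
      fun i => min (c i)
        ((exists_ceak_lam w hw κ E c h.1 h.2).choose * (w i * (c i / w i) ^ (-κ)))
    else fun _ => 0

private lemma isCEAk_ceakZ (w : N → ℝ) (hw : IsWeight w) (κ : ℝ) :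
    IsCEAk w κ (ceakZ w hw κ) := by
  intro E c hE hc
  obtain ⟨h0, hsum⟩ := (exists_ceak_lam w hw κ E c hE hc).choose_spec
  refine ⟨_, h0, fun i => ?_, ?_⟩
  · simp only [ceakZ, dif_pos (And.intro hE hc)]
  · simp only [ceakZ, dif_pos (And.intro hE hc)]
    exact hsum

private lemma isRule_of_isCEAk (w : N → ℝ) (hw : IsWeight w) (κ : ℝ)
    (z : ℝ → (N → ℝ) → N → ℝ) (hz : IsCEAk w κ z) : IsRule z := by
  intro E c hE hc
  obtain ⟨lam, hlam, hform, hsum⟩ := hz E c hE hc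
  have hle : ∀ i, z E c i ≤ c i := fun i => (hform i) ▸ min_le_left _ _
  refine ⟨fun i => ?_, fun h => ?_, fun h => ?_, hle⟩
  · rw [hform i]
    exact le_min (hc i)
      (mul_nonneg hlam (mul_nonneg (hw.1 i).le
        (Real.rpow_nonneg (div_nonneg (hc i) (hw.1 i).le) _)))
  · rw [hsum]; exact min_eq_left h.le
  · have hs : ∑ i, z E c i = ∑ i, c i := by rw [hsum]; exact min_eq_right h
    funext i
    exact (Finset.sum_eq_sum_iff_of_le (fun j _ => hle j)).1 hs i (Finset.mem_univ i)

end Aux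

/-- `CEA^w_κ` is well defined, is the separable directional rule `P^u`
with `u i x = w i * (x / w i) ^ (-κ)` for `x > 0` (and `u i 0 = 0`), is strategy-free
with respect to `w`, and is homogeneous. -/
theorem stmt10 [Fintype N] [DecidableEq N] (hN : 3 ≤ Fintype.card N)
    (w : N → ℝ) (hw : IsWeight w) (κ : ℝ) (hκ : 0 ≤ κ) :
    (∃ z : ℝ → (N → ℝ) → N → ℝ, IsRule z ∧ IsCEAk w κ z) ∧
    ∀ z : ℝ → (N → ℝ) → N → ℝ, IsRule z → IsCEAk w κ z →
      IsSepDir (fun i x => if x = 0 then 0 else w i * (x / w i) ^ (-κ)) z ∧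
      StrategyFree z w ∧ Homogeneous z := by
  obtain ⟨hwpos, hwsum⟩ := hw
  have hvnn : ∀ (c : N → ℝ), (∀ i, 0 ≤ c i) → ∀ i, 0 ≤ w i * (c i / w i) ^ (-κ) :=
    fun c hc i => mul_nonneg (hwpos i).le
      (Real.rpow_nonneg (div_nonneg (hc i) (hwpos i).le) _)
  constructor
  · exact ⟨ceakZ w ⟨hwpos, hwsum⟩ κ,
      isRule_of_isCEAk w ⟨hwpos, hwsum⟩ κ _ (isCEAk_ceakZ w ⟨hwpos, hwsum⟩ κ),
      isCEAk_ceakZ w ⟨hwpos, hwsum⟩ κ⟩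
  intro z hrule hceak
  refine ⟨⟨fun i => if_pos rfl, fun i x hx => ?_, fun E c hE hc => ?_⟩, ?_, ?_⟩
  · show (0:ℝ) < if x = 0 then 0 else w i * (x / w i) ^ (-κ)
    rw [if_neg hx.ne']
    exact mul_pos (hwpos i) (Real.rpow_pos_of_pos (div_pos hx (hwpos i)) _)
  · -- separable directional
    obtain ⟨lam, hlam, hform, hsum⟩ := hceak E c hE hc
    refine ⟨lam, hlam, fun i => ?_, hsum⟩
    show z E c i = min (c i) (lam * if c i = 0 then 0 else w i * (c i / w i) ^ (-κ))
    rcases eq_or_ne (c i) 0 with h0 | h0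
    · rw [hform i, if_pos h0, mul_zero, h0, min_self, zero_div]
      exact min_eq_left
        (mul_nonneg hlam (mul_nonneg (hwpos i).le (Real.rpow_nonneg le_rfl _)))
    · rw [hform i, if_neg h0]
  · -- strategy-free
    intro i lam E ci hlam0 hlamE hci j hj
    have hsum_erase : ∑ j ∈ univ.erase i, w j = 1 - w i := by
      have h := Finset.add_sum_erase univ w (Finset.mem_univ i)
      rw [hwsum] at h; linarith
    rw [hsum_erase] at hci
    have hE0 : 0 ≤ E := hlam0.trans hlamE
    have hciw : lam * w i ≤ ci := by nlinarith [hwpos i]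
    set c : N → ℝ := Function.update (fun k => lam * w k) i ci with hcdef
    have hcj : ∀ k, k ≠ i → c k = lam * w k := fun k hk => Function.update_of_ne hk _ _
    have hcii : c i = ci := Function.update_self _ _ _
    have hc : ∀ k, 0 ≤ c k := by
      intro k
      rcases eq_or_ne k i with rfl | hk
      · rw [hcii]; exact (mul_nonneg hlam0 (hwpos k).le).trans hciw
      · rw [hcj k hk]; exact mul_nonneg hlam0 (hwpos k).le
    have hsumc : ∑ k, c k = ci + lam * (1 - w i) := by
      rw [← Finset.add_sum_erase univ c (Finset.mem_univ i), hcii]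
      congr 1
      rw [Finset.sum_congr rfl (fun k hk => hcj k (Finset.ne_of_mem_erase hk)),
        ← Finset.mul_sum, hsum_erase]
    have hEc : E ≤ ∑ k, c k := by rw [hsumc]; linarith
    obtain ⟨μ, hμ, hform, hsum⟩ := hceak E c hE0 hc
    rcases hlam0.eq_or_lt with h0 | hlampos
    · have := hrule E c hE0 hc
      rw [← h0, zero_mul]
      have h1 : z E c j ≤ 0 := by
        have := (this.2.2.2 j)
        rw [hcj j hj, ← h0, zero_mul] at this
        exact this
      exact le_antisymm h1 (this.1 j)
    · have hsumE : ∑ k, z E c k = E := by rw [hsum]; exact min_eq_left hEc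
      have hkey : lam ≤ μ * lam ^ (-κ) := by
        by_contra hcon
        push_neg at hcon
        have hb : ∀ k, z E c k ≤ μ * (w k * lam ^ (-κ)) := by
          intro k
          rcases eq_or_ne k i with rfl | hk
          · rw [hform k]
            refine (min_le_right _ _).trans ?_
            have h1 : lam ≤ c k / w k := by
              rw [le_div_iff₀ (hwpos k), hcii]; exact hciw
            have h2 : (c k / w k) ^ (-κ) ≤ lam ^ (-κ) := by
              rw [Real.rpow_neg (div_nonneg (hc k) (hwpos k).le),
                Real.rpow_neg hlampos.le]
              exact inv_anti₀ (Real.rpow_pos_of_pos hlampos _)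
                (Real.rpow_le_rpow hlampos.le h1 hκ)
            have := mul_le_mul_of_nonneg_left h2 (hwpos k).le
            exact mul_le_mul_of_nonneg_left this hμ
          · rw [hform k, hcj k hk,
              mul_div_cancel_right₀ lam (ne_of_gt (hwpos k))]
            exact min_le_right _ _
        have hEb : E ≤ μ * lam ^ (-κ) := by
          calc E = ∑ k, z E c k := hsumE.symm
            _ ≤ ∑ k, μ * (w k * lam ^ (-κ)) := Finset.sum_le_sum fun k _ => hb k
            _ = (μ * lam ^ (-κ)) * ∑ k, w k := by
                rw [Finset.mul_sum]; exact Finset.sum_congr rfl fun k _ => by ring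
            _ = μ * lam ^ (-κ) := by rw [hwsum, mul_one]
        linarith
      rw [hform j, hcj j hj, mul_div_cancel_right₀ lam (ne_of_gt (hwpos j))]
      refine min_eq_left ?_
      have := mul_le_mul_of_nonneg_right hkey (hwpos j).le
      nlinarith
  · -- homogeneous
    intro E c hE hc hEc s hs
    funext i
    set v : N → ℝ := fun k => w k * (c k / w k) ^ (-κ) with hvdef
    have hv : ∀ k, 0 ≤ v k := hvnn c hc
    obtain ⟨μ, hμ, hform, hsum⟩ := hceak E c hE hc
    obtain ⟨μ', hμ', hform', hsum'⟩ := hceak (s * E) (fun k => s * c k)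
      (mul_nonneg hs.le hE) (fun k => mul_nonneg hs.le (hc k))
    have hA : ∀ k, z (s * E) (fun k => s * c k) k = min (s * c k) ((μ' * s ^ (-κ)) * v k) := by
      intro k
      rw [hform' k]
      congr 1
      rw [mul_div_assoc, Real.mul_rpow hs.le (div_nonneg (hc k) (hwpos k).le)]
      ring
    have hB : ∀ k, s * z E c k = min (s * c k) ((s * μ) * v k) := by
      intro k
      rw [hform k, mul_min_of_nonneg _ _ hs.le]
      congr 1
      ring
    have hsums : ∑ k, min (s * c k) ((μ' * s ^ (-κ)) * v k)
        = ∑ k, min (s * c k) ((s * μ) * v k) := by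
      have e1 : ∑ k, min (s * c k) ((μ' * s ^ (-κ)) * v k)
          = min (s * E) (∑ k, s * c k) :=
        (Finset.sum_congr rfl fun k _ => (hA k).symm).trans hsum'
      have e2 : ∑ k, min (s * c k) ((s * μ) * v k) = ∑ k, s * z E c k :=
        Finset.sum_congr rfl fun k _ => (hB k).symm
      rw [e1, e2, ← Finset.mul_sum, ← Finset.mul_sum, hsum,
        mul_min_of_nonneg _ _ hs.le]
    rw [hA i, hB i]
    exact sum_min_eq_of_sum_eq hv hsums i
end

section
/- Let N be a finite set with |N| ≥ 3 and let w be a weight. If a separable directional rule P^u is strategy-free^w and homogeneous, then there exists κ ≥ 0 such that P^u(E,c) = CEA^w_κ(E,c) for every claims problem (E,c). -/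
open Finset MeasureTheory

variable {N : Type*}

/-- If `min a b = v` and `v < a` then `b = v`. -/
private lemma min_eq_of_lt_left {a b v : ℝ} (h : min a b = v) (hv : v < a) : b = v := by
  rcases min_eq_iff.mp h with ⟨h1, _⟩ | ⟨h1, _⟩
  · exact absurd h1 (by linarith)
  · exact h1

/-- Cauchy: a monotone additive map on ℝ is linear. -/
private lemma cauchy_mono (f : ℝ →+ ℝ) (hf : Monotone f) (t : ℝ) : f t = t * f 1 := by
  have hq : ∀ q : ℚ, f (q : ℝ) = (q : ℝ) * f 1 := by
    intro q
    have := map_rat_smul f q (1 : ℝ)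
    simpa [Rat.smul_def] using this
  have hL : 0 ≤ f 1 := by
    have h0 : f 0 = 0 := map_zero f
    have := hf (show (0:ℝ) ≤ 1 by norm_num)
    linarith
  rcases eq_or_lt_of_le hL with hL0 | hLpos
  · -- f 1 = 0
    obtain ⟨r, hr⟩ := exists_rat_gt t
    obtain ⟨q, hqt⟩ := exists_rat_lt t
    have h1 : f t ≤ f r := hf hr.le
    have h2 : f q ≤ f t := hf hqt.le
    rw [hq] at h1 h2
    rw [← hL0] at h1 h2 ⊢
    linarith
  · have upper : f t ≤ t * f 1 := by
      apply le_of_forall_pos_le_add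
      intro ε hε
      obtain ⟨r, hr1, hr2⟩ := exists_rat_btwn (show t < t + ε / f 1 by linarith [div_pos hε hLpos])
      have h1 : f t ≤ f r := hf hr1.le
      rw [hq] at h1
      have : (r : ℝ) * f 1 < (t + ε / f 1) * f 1 := by
        exact mul_lt_mul_of_pos_right hr2 hLpos
      rw [add_mul, div_mul_cancel₀ _ (ne_of_gt hLpos)] at this
      linarith
    have lower : t * f 1 ≤ f t := by
      apply le_of_forall_pos_le_add
      intro ε hε
      obtain ⟨q, hq1, hq2⟩ := exists_rat_btwn (show t - ε / f 1 < t by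
        have : 0 < ε / f 1 := div_pos hε hLpos
        linarith)
      have h1 : f q ≤ f t := hf hq2.le
      rw [hq] at h1
      have : (t - ε / f 1) * f 1 < (q : ℝ) * f 1 := mul_lt_mul_of_pos_right hq1 hLpos
      rw [sub_mul, div_mul_cancel₀ _ (ne_of_gt hLpos)] at this
      linarith
    linarith

private lemma step1L {N : Type*} [Fintype N] [DecidableEq N]
    (hcard2 : 1 < Fintype.card N)
    {w : N → ℝ} (hw : IsWeight w) {u : N → ℝ → ℝ} {z : ℝ → (N → ℝ) → N → ℝ}
    (hsep : IsSepDir u z) (hsf : StrategyFree z w) :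
    ∀ i j : N, j ≠ i → ∀ lam s : ℝ, 0 < lam → lam < s →
      w j * u i (s * w i) ≤ w i * u j (lam * w j) := by
  classical
  obtain ⟨hu0, hupos, hP⟩ := hsep
  obtain ⟨hwpos, hwsum⟩ := hw
  have hers : ∀ i : N, ∑ j ∈ Finset.univ.erase i, w j = 1 - w i := by
    intro i
    have h := Finset.add_sum_erase Finset.univ w (Finset.mem_univ i)
    rw [hwsum] at h
    linarith
  intro i j hji lam s hlam hls
  set c : N → ℝ := Function.update (fun k => lam * w k) i (s * w i) with hcdef
  have hci : c i = s * w i := Function.update_self _ _ _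
  have hck : ∀ k, k ≠ i → c k = lam * w k := fun k hk => Function.update_of_ne hk _ _
  have hcnn : ∀ k, 0 ≤ c k := by
    intro k
    rcases eq_or_ne k i with rfl | hk
    · rw [hci]; exact mul_nonneg (by linarith) (hwpos k).le
    · rw [hck k hk]; exact mul_nonneg hlam.le (hwpos k).le
  have hserase : ∑ k ∈ univ.erase i, c k = lam * (1 - w i) := by
    rw [Finset.sum_congr rfl (fun k hk => hck k (Finset.ne_of_mem_erase hk)),
      ← Finset.mul_sum, hers i]
  have hsumc : ∑ k, c k = s * w i + lam * (1 - w i) := by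
    rw [← Finset.add_sum_erase univ c (mem_univ i), hci, hserase]
  have hwi1 : w i < 1 := by
    have := hers i
    have h2 : 0 < ∑ j ∈ univ.erase i, w j := by
      obtain ⟨j0, hj0⟩ := Fintype.exists_ne_of_one_lt_card hcard2 i
      have hmem : j0 ∈ univ.erase i := Finset.mem_erase.mpr ⟨hj0, mem_univ j0⟩
      exact Finset.sum_pos' (fun k _ => (hwpos k).le) ⟨j0, hmem, hwpos j0⟩
    linarith
  have hEltc : lam < ∑ k, c k := by
    rw [hsumc]
    nlinarith [hwpos i, hls]
  -- strategy-freeness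
  have hsf' : ∀ k, k ≠ i → z lam c k = lam * w k := by
    intro k hk
    refine hsf i lam lam (s * w i) hlam.le le_rfl ?_ k hk
    rw [hers i]
    nlinarith [hwpos i]
  obtain ⟨μ, hμnn, hmin, hsum⟩ := hP lam c hlam.le hcnn
  rw [min_eq_left hEltc.le] at hsum
  have hzerase : ∑ k ∈ univ.erase i, z lam c k = lam * (1 - w i) := by
    rw [Finset.sum_congr rfl (fun k hk => hsf' k (Finset.ne_of_mem_erase hk)),
      ← Finset.mul_sum, hers i]
  have hzi : z lam c i = lam * w i := by
    have := Finset.add_sum_erase univ (z lam c) (mem_univ i)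
    rw [hzerase, hsum] at this
    linarith
  have hzi' : min (s * w i) (μ * u i (s * w i)) = lam * w i := by
    rw [← hci, ← hmin i, hzi]
  have hkey : μ * u i (s * w i) = lam * w i :=
    min_eq_of_lt_left hzi' (by nlinarith [hwpos i])
  have hineq : lam * w j ≤ μ * u j (lam * w j) := by
    have h1 := hmin j
    rw [hsf' j hji, hck j hji] at h1
    exact min_eq_left_iff.mp h1.symm
  have hupos' : 0 < u i (s * w i) := hupos i _ (mul_pos (lt_trans hlam hls) (hwpos i))
  have h2 := mul_le_mul_of_nonneg_right hineq hupos'.le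
  -- lam * w j * u_i ≤ μ * u_j * u_i = lam * w i * u_j
  nlinarith [hupos j (lam * w j) (mul_pos hlam (hwpos j)), hwpos i, hwpos j]

private lemma step2L {N : Type*} [Fintype N] [DecidableEq N]
    (hcard2 : 1 < Fintype.card N)
    {w : N → ℝ} (hwpos : ∀ i, 0 < w i) {u : N → ℝ → ℝ}
    (hS : ∀ i j : N, j ≠ i → ∀ lam s : ℝ, 0 < lam → lam < s →
      w j * u i (s * w i) ≤ w i * u j (lam * w j)) :
    ∀ (i : N) (x y : ℝ), 0 < x → x < y → u i y ≤ u i x := by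
  intro i x y hx hxy
  obtain ⟨j, hj⟩ := Fintype.exists_ne_of_one_lt_card hcard2 i
  set lam := x / w i with hlamdef
  set s := y / w i with hsdef
  have hwi := hwpos i
  have hlam : 0 < lam := div_pos hx hwi
  have hls : lam < s := by
    rw [hlamdef, hsdef, div_lt_div_iff_of_pos_right hwi]
    exact hxy
  set m := (lam + s) / 2 with hmdef
  have hm1 : lam < m := by rw [hmdef]; linarith
  have hm2 : m < s := by rw [hmdef]; linarith
  have hA := hS i j hj m s (by linarith) hm2
  have hB := hS j i hj.symm lam m hlam hm1
  have hxe : lam * w i = x := div_mul_cancel₀ x (ne_of_gt hwi)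
  have hye : s * w i = y := div_mul_cancel₀ y (ne_of_gt hwi)
  rw [hxe] at hB
  rw [hye] at hA
  have := hwpos j
  nlinarith

private lemma step3L {N : Type*} [Fintype N] [DecidableEq N]
    (hNne : Nonempty N) {u : N → ℝ → ℝ} {z : ℝ → (N → ℝ) → N → ℝ}
    (hsep : IsSepDir u z) (hhom : Homogeneous z) :
    ∀ k l : N, k ≠ l → ∀ x y lam : ℝ, 0 < x → 0 < y → 0 < lam →
      u k (lam * x) * u l y = u k x * u l (lam * y) := by
  classical
  obtain ⟨hu0, hupos, hP⟩ := hsep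
  intro k l hkl x y lam hx hy hlam
  set c : N → ℝ := fun m => if m = k then x else if m = l then y else 1 with hcdef
  have hcpos : ∀ m, 0 < c m := by
    intro m
    rw [hcdef]
    dsimp only
    split_ifs <;> first | exact hx | exact hy | exact one_pos
  have hck : c k = x := by rw [hcdef]; simp
  have hcl : c l = y := by rw [hcdef]; simp [Ne.symm hkl]
  have hune : ∀ m, u m (c m) ≠ 0 := fun m => ne_of_gt (hupos m _ (hcpos m))
  set μ0 : ℝ := univ.inf' ⟨k, mem_univ k⟩ (fun m => c m / (2 * u m (c m))) with hμ0def
  have hμ0pos : 0 < μ0 := by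
    rw [hμ0def]; apply (Finset.lt_inf'_iff _).mpr
    intro m _
    exact div_pos (hcpos m) (by linarith [hupos m _ (hcpos m)])
  have hμ0lt : ∀ m, μ0 * u m (c m) < c m := by
    intro m
    have h1 : μ0 ≤ c m / (2 * u m (c m)) :=
      Finset.inf'_le _ (mem_univ m)
    have h2 := hupos m _ (hcpos m)
    have h3 := mul_le_mul_of_nonneg_right h1 h2.le
    rw [div_mul_eq_mul_div] at h3
    rw [le_div_iff₀ (by linarith)] at h3
    nlinarith [hcpos m]
  set E : ℝ := ∑ m, μ0 * u m (c m) with hEdef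
  have hEnn : 0 ≤ E :=
    Finset.sum_nonneg fun m _ => mul_nonneg hμ0pos.le (hupos m _ (hcpos m)).le
  have hElt : E < ∑ m, c m :=
    Finset.sum_lt_sum_of_nonempty Finset.univ_nonempty fun m _ => hμ0lt m
  obtain ⟨μ, hμnn, hmin, hsum⟩ := hP E c hEnn fun m => (hcpos m).le
  rw [min_eq_left hElt.le] at hsum
  have hz0 : ∀ m, z E c m = μ0 * u m (c m) := by
    rcases le_total μ μ0 with hcase | hcase
    · have hle : ∀ m ∈ univ, z E c m ≤ μ0 * u m (c m) := by
        intro m _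
        rw [hmin m]
        exact le_trans (min_le_right _ _)
          (mul_le_mul_of_nonneg_right hcase (hupos m _ (hcpos m)).le)
      have := (Finset.sum_eq_sum_iff_of_le hle).mp (by rw [hsum, hEdef])
      exact fun m => this m (mem_univ m)
    · have hle : ∀ m ∈ univ, μ0 * u m (c m) ≤ z E c m := by
        intro m _
        rw [hmin m]
        refine le_min (hμ0lt m).le
          (mul_le_mul_of_nonneg_right hcase (hupos m _ (hcpos m)).le)
      have := (Finset.sum_eq_sum_iff_of_le hle).mp (by rw [hsum, hEdef])
      exact fun m => (this m (mem_univ m)).symm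
  have hh := hhom E c hEnn (fun m => (hcpos m).le) hElt.le lam hlam
  obtain ⟨μ', hμ'nn, hmin', _⟩ := hP (lam * E) (fun m => lam * c m)
    (mul_nonneg hlam.le hEnn) (fun m => mul_nonneg hlam.le (hcpos m).le)
  have hext : ∀ m, μ' * u m (lam * c m) = lam * (μ0 * u m (c m)) := by
    intro m
    have h1 := hmin' m
    rw [hh] at h1
    dsimp only at h1
    rw [hz0 m] at h1
    refine min_eq_of_lt_left h1.symm ?_
    have := hμ0lt m
    nlinarith
  have e1 := hext k
  have e2 := hext l
  rw [hck] at e1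
  rw [hcl] at e2
  have hμ'pos : 0 < μ' := by
    rcases eq_or_lt_of_le hμ'nn with h | h
    · exfalso
      rw [← h, zero_mul] at e1
      nlinarith [mul_pos hlam (mul_pos hμ0pos (hupos k x hx))]
    · exact h
  have key : (lam * μ0) * (u k (lam * x) * u l y)
      = (lam * μ0) * (u k x * u l (lam * y)) := by
    linear_combination (u l (lam * y)) * e1 - (u k (lam * x)) * e2
  exact mul_left_cancel₀ (by positivity) key

private lemma step4L {N : Type*} [Fintype N] [DecidableEq N]
    (hcard2 : 1 < Fintype.card N) {u : N → ℝ → ℝ}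
    (hupos : ∀ (i : N) (x : ℝ), 0 < x → 0 < u i x)
    (hanti : ∀ (i : N) (x y : ℝ), 0 < x → x < y → u i y ≤ u i x)
    (hH : ∀ k l : N, k ≠ l → ∀ x y lam : ℝ, 0 < x → 0 < y → 0 < lam →
      u k (lam * x) * u l y = u k x * u l (lam * y)) :
    ∃ σ : ℝ, σ ≤ 0 ∧ ∀ (k : N) (x : ℝ), 0 < x → u k x = u k 1 * x ^ σ := by
  obtain ⟨i0, j0, hij0⟩ := Fintype.exists_pair_of_one_lt_card hcard2
  set φ : ℝ → ℝ := fun t => u j0 t / u j0 1 with hφdef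
  have hφpos : ∀ t : ℝ, 0 < t → 0 < φ t := fun t ht =>
    div_pos (hupos j0 t ht) (hupos j0 1 one_pos)
  have hu1 : ∀ m : N, (0:ℝ) < u m 1 := fun m => hupos m 1 one_pos
  have hU : ∀ (k : N) (x y : ℝ), 0 < x → 0 < y → u k (x * y) = φ x * u k y := by
    intro k x y hx hy
    rcases eq_or_ne k j0 with rfl | hk
    · have hA := hH k i0 hij0.symm y 1 x hy one_pos hx
      have hB := hH i0 k hij0 1 1 x one_pos one_pos hx
      rw [mul_one] at hA hB
      rw [hφdef]
      dsimp only
      rw [div_mul_eq_mul_div, eq_div_iff (ne_of_gt (hu1 k))]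
      have hi01 := hu1 i0
      have key : (u k (x * y) * u k 1) * u i0 1 = (u k x * u k y) * u i0 1 := by
        linear_combination (u k 1) * hA + (u k y) * hB
      exact mul_right_cancel₀ (ne_of_gt hi01) key
    · have hA := hH k j0 hk y 1 x hy one_pos hx
      rw [mul_one] at hA
      rw [hφdef]
      dsimp only
      rw [div_mul_eq_mul_div, eq_div_iff (ne_of_gt (hu1 j0))]
      linarith [hA]
  have hφmul : ∀ s t : ℝ, 0 < s → 0 < t → φ (s * t) = φ s * φ t := by
    intro s t hs ht
    rw [hφdef]
    dsimp only
    rw [hU j0 s t hs ht]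
    field_simp
    ring
  set ψ : ℝ → ℝ := fun t => Real.log (φ (Real.exp t)) with hψdef
  have hψadd : ∀ a b : ℝ, ψ (a + b) = ψ a + ψ b := by
    intro a b
    rw [hψdef]
    dsimp only
    rw [Real.exp_add, hφmul _ _ (Real.exp_pos a) (Real.exp_pos b),
      Real.log_mul (ne_of_gt (hφpos _ (Real.exp_pos a))) (ne_of_gt (hφpos _ (Real.exp_pos b)))]
  have hψanti : ∀ a b : ℝ, a ≤ b → ψ b ≤ ψ a := by
    intro a b hab
    rcases eq_or_lt_of_le hab with rfl | hab
    · exact le_refl _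
    · have h1 : Real.exp a < Real.exp b := Real.exp_lt_exp.mpr hab
      have h2 : u j0 (Real.exp b) ≤ u j0 (Real.exp a) :=
        hanti j0 _ _ (Real.exp_pos a) h1
      rw [hψdef]
      dsimp only
      apply Real.log_le_log (hφpos _ (Real.exp_pos b))
      rw [hφdef]
      dsimp only
      exact (div_le_div_iff_of_pos_right (hu1 j0)).mpr h2
  set F : ℝ →+ ℝ := AddMonoidHom.mk' ψ hψadd with hFdef
  have hFmono : Monotone (⇑(-F)) := by
    intro a b hab
    simp only [AddMonoidHom.neg_apply, neg_le_neg_iff]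
    exact hψanti a b hab
  set σ : ℝ := ψ 1 with hσdef
  have hψlin : ∀ t : ℝ, ψ t = t * σ := by
    intro t
    have := cauchy_mono (-F) hFmono t
    simp only [AddMonoidHom.neg_apply] at this
    have hFt : F t = ψ t := rfl
    have hF1 : F 1 = ψ 1 := rfl
    rw [hFt, hF1] at this
    rw [hσdef]
    linarith
  have hψ0 : ψ 0 = 0 := by
    have := hψadd 0 0
    simp at this
    linarith
  have hσle : σ ≤ 0 := by
    have := hψanti 0 1 (by norm_num)
    rw [hψ0] at this
    rw [hσdef]
    linarith
  have hφpow : ∀ t : ℝ, 0 < t → φ t = t ^ σ := by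
    intro t ht
    have h1 : ψ (Real.log t) = Real.log (φ t) := by
      rw [hψdef]
      dsimp only
      rw [Real.exp_log ht]
    rw [hψlin] at h1
    rw [Real.rpow_def_of_pos ht, h1, Real.exp_log (hφpos t ht)]
  have hupow : ∀ (k : N) (x : ℝ), 0 < x → u k x = u k 1 * x ^ σ := by
    intro k x hx
    have := hU k x 1 hx one_pos
    rw [mul_one] at this
    rw [this, hφpow x hx]
    ring
  exact ⟨σ, hσle, hupow⟩

private lemma step5L {N : Type*} [Fintype N] [DecidableEq N]
    {w : N → ℝ} (hwpos : ∀ i, 0 < w i) {u : N → ℝ → ℝ}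
    {σ : ℝ}
    (hupow : ∀ (k : N) (x : ℝ), 0 < x → u k x = u k 1 * x ^ σ)
    (hS : ∀ i j : N, j ≠ i → ∀ lam s : ℝ, 0 < lam → lam < s →
      w j * u i (s * w i) ≤ w i * u j (lam * w j)) :
    ∀ i j : N, j ≠ i → u i 1 * w i ^ σ / w i ≤ u j 1 * w j ^ σ / w j := by
  classical
  set b : N → ℝ := fun m => u m 1 * w m ^ σ / w m with hbdef
  show ∀ i j : N, j ≠ i → b i ≤ b j
  intro i j hji
  have hwi := hwpos i
  have hwj := hwpos j
  have hev : ∀ t ∈ Set.Ioi (1:ℝ), (b i * (w i * w j)) * t ^ σ ≤ b j * (w i * w j) := by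
    intro t ht
    have ht1 : (1:ℝ) < t := ht
    have h := hS i j hji 1 t one_pos ht1
    rw [one_mul] at h
    rw [hupow i _ (by positivity), hupow j _ hwj] at h
    rw [Real.mul_rpow (by linarith) hwi.le] at h
    have hwiσ : (0:ℝ) < w i ^ σ := Real.rpow_pos_of_pos hwi σ
    have hwjσ : (0:ℝ) < w j ^ σ := Real.rpow_pos_of_pos hwj σ
    have hbi : b i * (w i * w j) = u i 1 * w i ^ σ * w j := by
      rw [hbdef]; field_simp
    have hbj : b j * (w i * w j) = u j 1 * w j ^ σ * w i := by
      rw [hbdef]; field_simp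
    rw [hbi, hbj]
    nlinarith [h]
  have htend : Filter.Tendsto (fun t : ℝ => (b i * (w i * w j)) * t ^ σ)
      (nhdsWithin 1 (Set.Ioi 1)) (nhds (b i * (w i * w j))) := by
    have h1 : Filter.Tendsto (fun t : ℝ => t ^ σ) (nhdsWithin 1 (Set.Ioi 1))
        (nhds 1) := by
      have := (Real.continuousAt_rpow_const 1 σ (Or.inl one_ne_zero)).tendsto
      rw [Real.one_rpow] at this
      exact this.mono_left nhdsWithin_le_nhds
    simpa using h1.const_mul (b i * (w i * w j))
  have := le_of_tendsto htend (eventually_mem_nhdsWithin.mono (fun t ht => hev t ht))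
  exact le_of_mul_le_mul_right (by nlinarith [this]) (by positivity : (0:ℝ) < w i * w j)

/-- A separable directional rule that is strategy-free with respect to a
weight `w` and homogeneous coincides with `CEA^w_κ` for some `κ ≥ 0`. -/
theorem stmt11 [Fintype N] [DecidableEq N] (hN : 3 ≤ Fintype.card N)
    (w : N → ℝ) (hw : IsWeight w)
    (u : N → ℝ → ℝ) (z : ℝ → (N → ℝ) → N → ℝ)
    (hz : IsRule z) (hsep : IsSepDir u z)
    (hsf : StrategyFree z w) (hhom : Homogeneous z) :
    ∃ κ : ℝ, 0 ≤ κ ∧ IsCEAk w κ z := by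
  classical
  have hcard2 : 1 < Fintype.card N := by omega
  have hNne : Nonempty N := Fintype.card_pos_iff.mp (by omega)
  obtain ⟨j0⟩ := hNne
  have hwpos := hw.1
  have hu0 : ∀ i : N, u i 0 = 0 := hsep.1
  have hupos := hsep.2.1
  have hP := hsep.2.2
  have hS := step1L hcard2 hw hsep hsf
  have hanti := step2L hcard2 hwpos hS
  have hH := step3L ⟨j0⟩ hsep hhom
  obtain ⟨σ, hσle, hupow⟩ := step4L hcard2 hupos hanti hH
  have hble := step5L hwpos hupow hS
  have hu1 : ∀ m : N, (0:ℝ) < u m 1 := fun m => hupos m 1 one_pos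
  have hbpos : (0:ℝ) < u j0 1 * w j0 ^ σ / w j0 := by
    have := hwpos j0
    have := hu1 j0
    have : (0:ℝ) < w j0 ^ σ := Real.rpow_pos_of_pos (hwpos j0) σ
    positivity
  have hbeq : ∀ m : N, u m 1 * w m ^ σ / w m = u j0 1 * w j0 ^ σ / w j0 := by
    intro m
    rcases eq_or_ne m j0 with rfl | hm
    · rfl
    · exact le_antisymm (hble m j0 (Ne.symm hm)) (hble j0 m hm)
  -- Step 6: conclusion
  refine ⟨-σ, by linarith, ?_⟩
  intro E c hE hc
  obtain ⟨μ, hμnn, hmin, hsum⟩ := hP E c hE hc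
  refine ⟨μ * (u j0 1 * w j0 ^ σ / w j0), mul_nonneg hμnn hbpos.le, ?_, hsum⟩
  intro i
  rw [hmin i, neg_neg]
  rcases eq_or_lt_of_le (hc i) with hci | hci
  · rw [← hci, hu0 i, mul_zero, min_self, zero_div]
    have h1 : (0:ℝ) ≤ (0:ℝ) ^ σ := Real.rpow_nonneg le_rfl σ
    symm
    apply min_eq_left
    exact mul_nonneg (mul_nonneg hμnn hbpos.le)
      (mul_nonneg (hwpos i).le h1)
  · have hwi := hwpos i
    have hwiσ : (0:ℝ) < w i ^ σ := Real.rpow_pos_of_pos hwi σ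
    congr 1
    rw [hupow i _ hci]
    have hbi := hbeq i
    have hui1 : u i 1 = (u j0 1 * w j0 ^ σ / w j0) * w i / w i ^ σ := by
      rw [← hbi]
      field_simp
    rw [hui1, Real.div_rpow (hc i) hwi.le]
    field_simp
end

section
/- Let N be a finite set with |N| ≥ 3 and let w be a weight. A separable directional rule z is strategy-free^w, homogeneous, and claims monotonic if and only if z = CEA^w; i.e., CEA^w is the only separable directional rule with these three properties. -/
open Finset MeasureTheory

variable {N : Type*}

section AuxStmt12
variable [Fintype N] [DecidableEq N]

private lemma sum_split' (f : N → ℝ) (i : N) :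
    ∑ k, f k = f i + ∑ k ∈ univ.erase i, f k :=
  (Finset.add_sum_erase univ f (mem_univ i)).symm

private lemma sum_erase_weight {w : N → ℝ} (hwsum : (∑ i, w i) = 1) (i : N) :
    ∑ j ∈ univ.erase i, w j = 1 - w i := by
  have h := Finset.add_sum_erase univ w (mem_univ i)
  rw [hwsum] at h
  linarith

private lemma sum_two_fun (i j : N) (hij : j ≠ i) (g : N → ℝ)
    (hg : ∀ k, k ≠ i → k ≠ j → g k = 0) : ∑ k, g k = g i + g j := by
  have hjmem : j ∈ univ.erase i := Finset.mem_erase.mpr ⟨hij, mem_univ j⟩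
  rw [sum_split' g i, ← Finset.add_sum_erase _ _ hjmem,
    Finset.sum_eq_zero (fun k hk => hg k
      (Finset.ne_of_mem_erase (Finset.mem_of_mem_erase hk)) (Finset.ne_of_mem_erase hk))]
  ring

private lemma sum_eq_imp_eq {f g : N → ℝ} (hle : ∀ k, f k ≤ g k)
    (hsum : ∑ k, f k = ∑ k, g k) : ∀ k, f k = g k := by
  intro k
  by_contra h
  have hlt : f k < g k := lt_of_le_of_ne (hle k) h
  have := Finset.sum_lt_sum (fun i (_ : i ∈ univ) => hle i) ⟨k, mem_univ k, hlt⟩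
  linarith

private lemma mul_min' (a b c : ℝ) (ha : 0 ≤ a) : a * min b c = min (a*b) (a*c) := by
  rcases le_total b c with h | h
  · rw [min_eq_left h, min_eq_left (mul_le_mul_of_nonneg_left h ha)]
  · rw [min_eq_right h, min_eq_right (mul_le_mul_of_nonneg_left h ha)]

private lemma stepA {w : N → ℝ} (hw : IsWeight w)
    {z : ℝ → (N → ℝ) → N → ℝ} {u : N → ℝ → ℝ}
    (hu : IsSepDir u z) (hSF : StrategyFree z w)
    {i j : N} (hij : j ≠ i) {t s : ℝ} (hs : 0 < s) (hts : s < t) :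
    w j * u i (t * w i) ≤ w i * u j (s * w j) := by
  have hwi := hw.1 i
  have hwj := hw.1 j
  have ht : 0 < t := hs.trans hts
  have herase := sum_erase_weight hw.2 i
  set x := t * w i with hx
  set c := Function.update (fun k => s * w k) i x with hc
  have hxswi : s * w i < x := by rw [hx]; exact mul_lt_mul_of_pos_right hts hwi
  have hSFres : ∀ k, k ≠ i → z s c k = s * w k := by
    intro k hk
    refine hSF i s s x hs.le le_rfl ?_ k hk
    rw [herase]; nlinarith
  have hc0 : ∀ k, 0 ≤ c k := by
    intro k
    by_cases hk : k = i
    · subst hk; rw [hc, Function.update_self, hx]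
      exact (mul_pos ht hwi).le
    · rw [hc, Function.update_of_ne hk]
      exact mul_nonneg hs.le (hw.1 k).le
  obtain ⟨lam, hlam0, hform, hsum⟩ := hu.2.2 s c hs.le hc0
  have hcsum : ∑ k, c k = x + s * (1 - w i) := by
    rw [sum_split' c i, hc, Function.update_self]
    congr 1
    rw [← herase, Finset.mul_sum]
    exact Finset.sum_congr rfl fun k hk => by
      rw [Function.update_of_ne (Finset.ne_of_mem_erase hk)]
  have hslt : s < ∑ k, c k := by rw [hcsum]; nlinarith
  have hsum' : ∑ k, z s c k = s := by rw [hsum, min_eq_left hslt.le]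
  have hzi : z s c i = s * w i := by
    have h1 := sum_split' (z s c) i
    have h2 : ∑ k ∈ univ.erase i, z s c k = s * (1 - w i) := by
      rw [← herase, Finset.mul_sum]
      exact Finset.sum_congr rfl fun k hk => hSFres k (Finset.ne_of_mem_erase hk)
    rw [hsum', h2] at h1; linarith
  have hci : c i = x := by rw [hc]; exact Function.update_self ..
  have hminx : min x (lam * u i x) = s * w i := by
    have h := hform i; rw [hci, hzi] at h; exact h.symm
  have hui : lam * u i x = s * w i := by
    rcases min_eq_iff.mp hminx with h | h
    · linarith [h.1]
    · exact h.1
  have hlampos : 0 < lam := by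
    rcases hlam0.lt_or_eq with h | h
    · exact h
    · exfalso; rw [← h, zero_mul] at hui; nlinarith
  have hcj : c j = s * w j := by rw [hc]; exact Function.update_of_ne hij _ _
  have huj : s * w j ≤ lam * u j (s * w j) := by
    have h := hform j
    rw [hcj, hSFres j hij] at h
    exact min_eq_left_iff.mp h.symm
  have e1 : lam * (w j * u i x) = w i * (s * w j) := by
    have h : lam * (w j * u i x) = w j * (lam * u i x) := by ring
    rw [h, hui]; ring
  have e2 : w i * (s * w j) ≤ w i * (lam * u j (s * w j)) :=
    mul_le_mul_of_nonneg_left huj hwi.le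
  have e3 : w i * (lam * u j (s * w j)) = lam * (w i * u j (s * w j)) := by ring
  have hfin : lam * (w j * u i x) ≤ lam * (w i * u j (s * w j)) := by linarith
  exact le_of_mul_le_mul_left hfin hlampos

private lemma stepB (hcard : 1 < Fintype.card N)
    {z : ℝ → (N → ℝ) → N → ℝ} {u : N → ℝ → ℝ}
    (hu : IsSepDir u z) (hCM : ClaimsMonotonic z)
    (i : N) {x1 x2 : ℝ} (h1 : 0 < x1) (h12 : x1 < x2) :
    u i x1 ≤ u i x2 := by
  obtain ⟨j, hj⟩ := Fintype.exists_ne_of_one_lt_card hcard i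
  obtain ⟨hu0, hupos, hsep⟩ := hu
  set E := x1 / 2 with hEdef
  have hE0 : 0 < E := by positivity
  have hEx1 : E < x1 := by rw [hEdef]; linarith
  set c := Function.update (Function.update (fun _ : N => (0:ℝ)) j x1) i x1 with hc
  have hci : c i = x1 := by rw [hc]; exact Function.update_self ..
  have hcj : c j = x1 := by
    rw [hc, Function.update_of_ne hj]; exact Function.update_self ..
  have hck : ∀ k, k ≠ i → k ≠ j → c k = 0 := fun k hki hkj => by
    rw [hc, Function.update_of_ne hki, Function.update_of_ne hkj]
  have hc0 : ∀ k, 0 ≤ c k := by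
    intro k
    by_cases hki : k = i
    · rw [hki, hci]; linarith
    · by_cases hkj : k = j
      · rw [hkj, hcj]; linarith
      · rw [hck k hki hkj]
  obtain ⟨L, hL0, hLform, hLsum⟩ := hsep E c hE0.le hc0
  have hzk0 : ∀ k, k ≠ i → k ≠ j → z E c k = 0 := by
    intro k hki hkj
    rw [hLform k, hck k hki hkj, hu0 k, mul_zero, min_self]
  have hsc : ∑ k, c k = x1 + x1 := by
    rw [sum_two_fun i j hj c hck, hci, hcj]
  have hzsum : z E c i + z E c j = E := by
    rw [← sum_two_fun i j hj (z E c) hzk0, hLsum, hsc, min_eq_left (by linarith)]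
  have hzj0 : 0 ≤ z E c j := by
    rw [hLform j, hcj]
    exact le_min h1.le (mul_nonneg hL0 (hupos j x1 h1).le)
  have hzi0 : 0 ≤ z E c i := by
    rw [hLform i, hci]
    exact le_min h1.le (mul_nonneg hL0 (hupos i x1 h1).le)
  have hzi : z E c i = L * u i x1 := by
    have h := hLform i
    rw [hci] at h
    rcases min_eq_iff.mp h.symm with h' | h'
    · exfalso; linarith [h'.1]
    · exact h'.1.symm
  have hzj : z E c j = L * u j x1 := by
    have h := hLform j
    rw [hcj] at h
    rcases min_eq_iff.mp h.symm with h' | h'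
    · exfalso; linarith [h'.1]
    · exact h'.1.symm
  have hLpos : 0 < L := by
    rcases hL0.lt_or_eq with h | h
    · exact h
    · exfalso
      rw [hzi, hzj, ← h] at hzsum
      simp at hzsum
      linarith
  -- now update claim i to x2
  set c' := Function.update c i x2 with hc'
  have hc'i : c' i = x2 := by rw [hc']; exact Function.update_self ..
  have hc'j : c' j = x1 := by rw [hc', Function.update_of_ne hj]; exact hcj
  have hc'k : ∀ k, k ≠ i → k ≠ j → c' k = 0 := fun k hki hkj => by
    rw [hc', Function.update_of_ne hki]; exact hck k hki hkj
  have hc'0 : ∀ k, 0 ≤ c' k := by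
    intro k
    by_cases hki : k = i
    · rw [hki, hc'i]; linarith
    · by_cases hkj : k = j
      · rw [hkj, hc'j]; linarith
      · rw [hc'k k hki hkj]
  have hCMres : z E c i ≤ z E c' i := by
    refine hCM E c hE0.le hc0 (by rw [hsc]; linarith) i x2 ?_
    rw [hci]; exact h12
  obtain ⟨L', hL'0, hL'form, hL'sum⟩ := hsep E c' hE0.le hc'0
  have hz'k0 : ∀ k, k ≠ i → k ≠ j → z E c' k = 0 := by
    intro k hki hkj
    rw [hL'form k, hc'k k hki hkj, hu0 k, mul_zero, min_self]
  have hsc' : ∑ k, c' k = x2 + x1 := by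
    rw [sum_two_fun i j hj c' hc'k, hc'i, hc'j]
  have hz'sum : z E c' i + z E c' j = E := by
    rw [← sum_two_fun i j hj (z E c') hz'k0, hL'sum, hsc', min_eq_left (by linarith)]
  have hz'j0 : 0 ≤ z E c' j := by
    rw [hL'form j, hc'j]
    exact le_min h1.le (mul_nonneg hL'0 (hupos j x1 h1).le)
  have hz'i0 : 0 ≤ z E c' i := by
    rw [hL'form i, hc'i]
    exact le_min (by linarith) (mul_nonneg hL'0 (hupos i x2 (h1.trans h12)).le)
  have hz'i : z E c' i = L' * u i x2 := by
    have h := hL'form i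
    rw [hc'i] at h
    rcases min_eq_iff.mp h.symm with h' | h'
    · exfalso; linarith [h'.1]
    · exact h'.1.symm
  have hz'j : z E c' j = L' * u j x1 := by
    have h := hL'form j
    rw [hc'j] at h
    rcases min_eq_iff.mp h.symm with h' | h'
    · exfalso; linarith [h'.1]
    · exact h'.1.symm
  -- conclude
  rw [hzi, hz'i] at hCMres
  have hjle : L' * u j x1 ≤ L * u j x1 := by
    rw [hzi, hzj] at hzsum
    rw [hz'i, hz'j] at hz'sum
    linarith
  have hL'L : L' ≤ L := le_of_mul_le_mul_right hjle (hupos j x1 h1)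
  by_contra hcon
  push_neg at hcon
  have e1 : L' * u i x2 ≤ L * u i x2 :=
    mul_le_mul_of_nonneg_right hL'L (hupos i x2 (h1.trans h12)).le
  have e2 : L * u i x2 < L * u i x1 := mul_lt_mul_of_pos_left hcon hLpos
  linarith

private lemma crossEq {w : N → ℝ} (hw : IsWeight w)
    {z : ℝ → (N → ℝ) → N → ℝ} {u : N → ℝ → ℝ}
    (hu : IsSepDir u z) (hSF : StrategyFree z w) (hCM : ClaimsMonotonic z)
    (hcard : 1 < Fintype.card N)
    {i j : N} (hij : j ≠ i) {x y : ℝ} (hx : 0 < x) (hy : 0 < y) :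
    w j * u i x = w i * u j y := by
  have hwi := hw.1 i
  have hwj := hw.1 j
  set t := x / w i with htd
  set s := y / w j with hsd
  have ht : 0 < t := div_pos hx hwi
  have hs : 0 < s := div_pos hy hwj
  have hxt : t * w i = x := div_mul_cancel₀ x (ne_of_gt hwi)
  have hys : s * w j = y := div_mul_cancel₀ y (ne_of_gt hwj)
  set r := max t s + 1 with hrd
  have hrt : t < r := by
    have := le_max_left t s; rw [hrd]; linarith
  have hrs : s < r := by
    have := le_max_right t s; rw [hrd]; linarith
  have hA1 := stepA hw hu hSF hij hs hrs
  have hA2 := stepA hw hu hSF (Ne.symm hij) ht hrt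
  rw [hys] at hA1
  rw [hxt] at hA2
  have hB1 : u i x ≤ u i (r * w i) := by
    rw [← hxt]
    exact stepB hcard hu hCM i (by rw [hxt]; exact hx) (mul_lt_mul_of_pos_right hrt hwi)
  have hB2 : u j y ≤ u j (r * w j) := by
    rw [← hys]
    exact stepB hcard hu hCM j (by rw [hys]; exact hy) (mul_lt_mul_of_pos_right hrs hwj)
  have e1 : w j * u i x ≤ w j * u i (r * w i) := mul_le_mul_of_nonneg_left hB1 hwj.le
  have e2 : w i * u j y ≤ w i * u j (r * w j) := mul_le_mul_of_nonneg_left hB2 hwi.le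
  linarith

private lemma uconst {w : N → ℝ} (hw : IsWeight w)
    {z : ℝ → (N → ℝ) → N → ℝ} {u : N → ℝ → ℝ}
    (hu : IsSepDir u z) (hSF : StrategyFree z w) (hCM : ClaimsMonotonic z)
    (hcard : 1 < Fintype.card N) :
    ∃ κ : ℝ, 0 < κ ∧ ∀ i x, 0 < x → u i x = κ * w i := by
  have hne : Nonempty N := Fintype.card_pos_iff.mp (by omega)
  obtain ⟨i0⟩ := hne
  have hwi0 := hw.1 i0
  refine ⟨u i0 1 / w i0, div_pos (hu.2.1 i0 1 one_pos) hwi0, ?_⟩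
  intro i x hx
  by_cases hi : i = i0
  · subst hi
    obtain ⟨j, hj⟩ := Fintype.exists_ne_of_one_lt_card hcard i
    have h1 := crossEq hw hu hSF hCM hcard hj hx one_pos
    have h2 := crossEq hw hu hSF hCM hcard hj one_pos one_pos
    have : u i x = u i 1 := by
      have hwj := hw.1 j
      have : w j * u i x = w j * u i 1 := by rw [h1, h2]
      exact mul_left_cancel₀ (ne_of_gt hwj) this
    rw [this, div_mul_cancel₀ _ (ne_of_gt hwi0)]
  · have h := crossEq hw hu hSF hCM hcard (fun h' => hi h'.symm) hx one_pos
    -- h : w i0 * u i x = w i * u i0 1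
    rw [div_mul_eq_mul_div, eq_div_iff (ne_of_gt hwi0)]
    linarith

end AuxStmt12

/-- A separable directional rule is strategy-free with respect to `w`,
homogeneous, and claims monotonic if and only if it is `CEA^w`. -/
theorem stmt12 [Fintype N] [DecidableEq N] (hN : 3 ≤ Fintype.card N)
    (w : N → ℝ) (hw : IsWeight w)
    (z : ℝ → (N → ℝ) → N → ℝ) (hz : IsRule z)
    (hsep : ∃ u : N → ℝ → ℝ, IsSepDir u z) :
    (StrategyFree z w ∧ Homogeneous z ∧ ClaimsMonotonic z) ↔ IsCEA w z := by
  obtain ⟨u, hu⟩ := hsep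
  have hcard : 1 < Fintype.card N := by omega
  constructor
  · rintro ⟨hSF, _hHom, hCM⟩
    obtain ⟨κ, hκpos, hκ⟩ := uconst hw hu hSF hCM hcard
    intro E c hE hc
    obtain ⟨L, hL0, hform, hsum⟩ := hu.2.2 E c hE hc
    refine ⟨L * κ, mul_nonneg hL0 hκpos.le, ?_, hsum⟩
    intro i
    rcases (hc i).eq_or_lt with h | h
    · rw [hform i, ← h, hu.1 i, mul_zero, min_self]
      exact (min_eq_left (mul_nonneg (mul_nonneg hL0 hκpos.le) (hw.1 i).le)).symm
    · rw [hform i, hκ i (c i) h, show L * (κ * w i) = L * κ * w i from by ring]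
  · intro hCEA
    refine ⟨?_, ?_, ?_⟩
    · -- StrategyFree
      intro i lam E ci hlam hlamE hci j hji
      have hwi := hw.1 i
      have herase := sum_erase_weight hw.2 i
      rw [herase] at hci
      set c := Function.update (fun k => lam * w k) i ci with hcdef
      have hc0 : ∀ k, 0 ≤ c k := by
        intro k
        by_cases hk : k = i
        · subst hk; rw [hcdef, Function.update_self]; nlinarith
        · rw [hcdef, Function.update_of_ne hk]
          exact mul_nonneg hlam (hw.1 k).le
      have hE0 : 0 ≤ E := hlam.trans hlamE
      obtain ⟨μ, hμ0, hform, hsum⟩ := hCEA E c hE0 hc0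
      have hsc : ∑ k, c k = ci + lam * (1 - w i) := by
        rw [sum_split' c i, hcdef, Function.update_self]
        congr 1
        rw [← herase, Finset.mul_sum]
        exact Finset.sum_congr rfl fun k hk => by
          rw [Function.update_of_ne (Finset.ne_of_mem_erase hk)]
      have hEsc : E ≤ ∑ k, c k := by rw [hsc]; linarith
      have hsum' : ∑ k, z E c k = E := by rw [hsum, min_eq_left hEsc]
      by_cases hμlam : lam ≤ μ
      · rw [hform j, hcdef, Function.update_of_ne hji]
        exact min_eq_left (mul_le_mul_of_nonneg_right hμlam (hw.1 j).le)
      · exfalso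
        push_neg at hμlam
        have hb : ∀ k, z E c k ≤ μ * w k := fun k => (hform k) ▸ min_le_right _ _
        have h2 : ∑ k, z E c k ≤ ∑ k, μ * w k :=
          Finset.sum_le_sum fun k _ => hb k
        rw [hsum', ← Finset.mul_sum, hw.2, mul_one] at h2
        linarith
    · -- Homogeneous
      intro E c hE hc _hEs lam hlam
      obtain ⟨μ, hμ0, hμform, hμsum⟩ := hCEA (lam * E) (fun i => lam * c i)
        (mul_nonneg hlam.le hE) (fun i => mul_nonneg hlam.le (hc i))
      obtain ⟨ν, hν0, hνform, hνsum⟩ := hCEA E c hE hc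
      have hgk : ∀ k, lam * z E c k = min (lam * c k) (lam * (ν * w k)) := fun k => by
        rw [hνform k, mul_min' _ _ _ hlam.le]
      have hsums : ∑ k, z (lam * E) (fun i => lam * c i) k = ∑ k, lam * z E c k := by
        rw [hμsum, ← Finset.mul_sum, ← Finset.mul_sum, hνsum, mul_min' _ _ _ hlam.le]
      funext i
      rcases le_total μ (lam * ν) with h | h
      · refine sum_eq_imp_eq (f := fun k => z (lam * E) (fun i => lam * c i) k)
          (g := fun k => lam * z E c k) ?_ hsums i
        intro k
        show z (lam * E) (fun i => lam * c i) k ≤ lam * z E c k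
        rw [hμform k, hgk k]
        refine min_le_min le_rfl ?_
        have := mul_le_mul_of_nonneg_right h (hw.1 k).le
        nlinarith
      · refine (sum_eq_imp_eq (f := fun k => lam * z E c k)
          (g := fun k => z (lam * E) (fun i => lam * c i) k) ?_ hsums.symm i).symm
        intro k
        show lam * z E c k ≤ z (lam * E) (fun i => lam * c i) k
        rw [hμform k, hgk k]
        refine min_le_min le_rfl ?_
        have := mul_le_mul_of_nonneg_right h (hw.1 k).le
        nlinarith
    · -- ClaimsMonotonic
      intro E c hE hc hEs i ci' hci'
      obtain ⟨μ, hμ0, hμform, hμsum⟩ := hCEA E c hE hc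
      set c' := Function.update c i ci' with hc'def
      have hc'i : c' i = ci' := by rw [hc'def]; exact Function.update_self ..
      have hc'0 : ∀ k, 0 ≤ c' k := by
        intro k
        by_cases hk : k = i
        · rw [hk, hc'i]; linarith [hc i]
        · rw [hc'def, Function.update_of_ne hk]; exact hc k
      obtain ⟨ν, hν0, hνform, hνsum⟩ := hCEA E c' hE hc'0
      have hsplit := sum_split' c i
      have hsplit' := sum_split' c' i
      have hrest : ∑ k ∈ univ.erase i, c' k = ∑ k ∈ univ.erase i, c k :=
        Finset.sum_congr rfl fun k hk => by
          rw [hc'def, Function.update_of_ne (Finset.ne_of_mem_erase hk)]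
      have hE' : E ≤ ∑ k, c' k := by
        rw [hsplit', hrest, hc'i]
        rw [hsplit] at hEs
        linarith
      have h1 : ∑ k, z E c k = E := by rw [hμsum, min_eq_left hEs]
      have h2 : ∑ k, z E c' k = E := by rw [hνsum, min_eq_left hE']
      rcases le_total ν μ with h | h
      · have hrestz : ∀ k ∈ univ.erase i, z E c' k ≤ z E c k := by
          intro k hk
          have hki := Finset.ne_of_mem_erase hk
          rw [hμform k, hνform k, hc'def, Function.update_of_ne hki]
          exact min_le_min le_rfl (mul_le_mul_of_nonneg_right h (hw.1 k).le)
        have e1 := sum_split' (z E c) i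
        have e2 := sum_split' (z E c') i
        have e3 := Finset.sum_le_sum hrestz
        rw [h1] at e1
        rw [h2] at e2
        linarith
      · rw [hμform i, hνform i, hc'i]
        exact min_le_min hci'.le (mul_le_mul_of_nonneg_right h (hw.1 i).le)
end

section
/- Let N be a finite set with |N| ≥ 3, let w be a weight, and let κ ≥ 0. The rule CEA^w_κ is claims monotonic if and only if κ = 0. -/
open Finset MeasureTheory

variable {N : Type*}

/-- `CEA^w_κ` is claims monotonic if and only if `κ = 0`. -/
theorem stmt13 [Fintype N] [DecidableEq N] (hN : 3 ≤ Fintype.card N)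
    (w : N → ℝ) (hw : IsWeight w) (κ : ℝ) (hκ : 0 ≤ κ)
    (z : ℝ → (N → ℝ) → N → ℝ) (hz : IsRule z) (hk : IsCEAk w κ z) :
    ClaimsMonotonic z ↔ κ = 0 := by
  obtain ⟨hwpos, hwsum⟩ := hw
  constructor
  · -- claims monotonic → κ = 0
    intro hmono
    by_contra hκ0
    have hκpos : 0 < κ := lt_of_le_of_ne hκ (Ne.symm hκ0)
    have hcard : 1 < Fintype.card N := by omega
    have : Nonempty N := Fintype.card_pos_iff.mp (by omega)
    obtain ⟨i⟩ := this
    obtain ⟨j, hj⟩ := Fintype.exists_ne_of_one_lt_card hcard i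
    have hji : j ∈ univ.erase i := Finset.mem_erase.mpr ⟨hj, Finset.mem_univ j⟩
    have herasesum : w i + ∑ k ∈ univ.erase i, w k = 1 := by
      rw [Finset.add_sum_erase univ w (Finset.mem_univ i), hwsum]
    have hwi1 : w i < 1 := by
      have h1 : w j ≤ ∑ k ∈ univ.erase i, w k :=
        Finset.single_le_sum (fun k _ => (hwpos k).le) hji
      have := hwpos j
      linarith
    have hwnn : ∀ k, 0 ≤ w k := fun k => (hwpos k).le
    -- first problem : E = 1/2, c = w
    obtain ⟨lam, hl0, hzf, hzs⟩ := hk (1/2) w (by norm_num) hwnn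
    have hzf2 : ∀ k, z (1/2) w k = min (w k) (lam * w k) := by
      intro k
      rw [hzf k, div_self (hwpos k).ne', Real.one_rpow, mul_one]
    have hsum : ∑ k, z (1/2) w k = 1/2 := by
      rw [hzs, hwsum]; norm_num
    have hlam : lam = 1/2 := by
      rcases le_or_gt 1 lam with h1 | h1
      · exfalso
        have : ∀ k, z (1/2) w k = w k := by
          intro k
          rw [hzf2 k, min_eq_left]
          nlinarith [hwpos k]
        rw [Finset.sum_congr rfl (fun k _ => this k), hwsum] at hsum
        norm_num at hsum
      · have : ∀ k, z (1/2) w k = lam * w k := by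
          intro k
          rw [hzf2 k, min_eq_right]
          nlinarith [hwpos k]
        rw [Finset.sum_congr rfl (fun k _ => this k), ← Finset.mul_sum, hwsum,
          mul_one] at hsum
        exact hsum
    have hzi : z (1/2) w i = w i / 2 := by
      rw [hzf2 i, hlam, min_eq_right (by nlinarith [hwpos i])]
      ring
    -- second problem : claim of i raised to 2 * w i
    set c' := Function.update w i (2 * w i) with hc'def
    have hc'i : c' i = 2 * w i := Function.update_self i _ w
    have hc'k : ∀ k, k ≠ i → c' k = w k := fun k hk' => Function.update_of_ne hk' _ w
    have hc'nn : ∀ k, 0 ≤ c' k := by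
      intro k
      by_cases h : k = i
      · subst h; rw [hc'i]; nlinarith [hwpos k]
      · rw [hc'k k h]; exact hwnn k
    obtain ⟨lam', hl'0, hzf', hzs'⟩ := hk (1/2) c' (by norm_num) hc'nn
    have hzf2' : ∀ k, k ≠ i → z (1/2) c' k = min (w k) (lam' * w k) := by
      intro k hk'
      rw [hzf' k, hc'k k hk', div_self (hwpos k).ne', Real.one_rpow, mul_one]
    have h2pow : (2:ℝ) ^ (-κ) < 1 :=
      Real.rpow_lt_one_of_one_lt_of_neg (by norm_num) (by linarith)
    have h2pownn : (0:ℝ) ≤ (2:ℝ) ^ (-κ) := Real.rpow_nonneg (by norm_num) _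
    have hzfi' : z (1/2) c' i = min (2 * w i) (lam' * (w i * (2:ℝ) ^ (-κ))) := by
      rw [hzf' i, hc'i, mul_div_assoc, div_self (hwpos i).ne', mul_one]
    have hsumc' : ∑ k, c' k = 1 + w i := by
      rw [← Finset.add_sum_erase univ c' (Finset.mem_univ i), hc'i,
        Finset.sum_congr rfl (fun k hk' => hc'k k (Finset.mem_erase.mp hk').1)]
      linarith
    have hsum' : ∑ k, z (1/2) c' k = 1/2 := by
      rw [hzs', hsumc', min_eq_left (by nlinarith [hwpos i])]
    -- claims monotonicity applied
    have hmon := hmono (1/2) w (by norm_num) hwnn (by rw [hwsum]; norm_num) i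
      (2 * w i) (by nlinarith [hwpos i])
    rw [hzi, ← hc'def] at hmon
    -- z (1/2) c' i ≥ w i / 2
    have hsplit : z (1/2) c' i + ∑ k ∈ univ.erase i, z (1/2) c' k = 1/2 := by
      rw [Finset.add_sum_erase univ _ (Finset.mem_univ i)]; exact hsum'
    have hlam'le : lam' ≤ 1/2 := by
      by_contra h
      push_neg at h
      have hlow : ∀ k ∈ univ.erase i, w k / 2 < z (1/2) c' k := by
        intro k hk'
        have hk'' := (Finset.mem_erase.mp hk').1
        rw [hzf2' k hk'']
        have := hwpos k
        rcases min_cases (w k) (lam' * w k) with ⟨he, _⟩ | ⟨he, _⟩ <;> rw [he] <;>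
          nlinarith
      have hstrict : ∑ k ∈ univ.erase i, w k / 2 < ∑ k ∈ univ.erase i, z (1/2) c' k :=
        Finset.sum_lt_sum_of_nonempty ⟨j, hji⟩ hlow
      rw [← Finset.sum_div] at hstrict
      linarith
    have hzib : z (1/2) c' i < w i / 2 := by
      rw [hzfi']
      have h1 : lam' * (w i * (2:ℝ) ^ (-κ)) < w i / 2 := by
        have hwi := hwpos i
        have ha : lam' * (w i * (2:ℝ) ^ (-κ)) ≤ (1/2) * (w i * (2:ℝ) ^ (-κ)) :=
          mul_le_mul_of_nonneg_right hlam'le (mul_nonneg (hwnn i) h2pownn)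
        have hb : w i * (2:ℝ) ^ (-κ) < w i := mul_lt_of_lt_one_right hwi h2pow
        linarith
      exact lt_of_le_of_lt (min_le_right _ _) h1
    linarith
  · -- κ = 0 → claims monotonic
    intro hk0
    subst hk0
    intro E c hE hc hEc i ci' hlt
    set c' := Function.update c i ci' with hc'def
    have hc'i : c' i = ci' := Function.update_self i _ c
    have hc'k : ∀ k, k ≠ i → c' k = c k := fun k hk' => Function.update_of_ne hk' _ c
    have hc'nn : ∀ k, 0 ≤ c' k := by
      intro k
      by_cases h : k = i
      · subst h; rw [hc'i]; linarith [hc k]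
      · rw [hc'k k h]; exact hc k
    obtain ⟨lam, hl0, hzf, hzs⟩ := hk E c hE hc
    obtain ⟨lam', hl'0, hzf', hzs'⟩ := hk E c' hE hc'nn
    have hzf2 : ∀ k, z E c k = min (c k) (lam * w k) := by
      intro k; rw [hzf k]; norm_num
    have hzf2' : ∀ k, z E c' k = min (c' k) (lam' * w k) := by
      intro k; rw [hzf' k]; norm_num
    have hsum : ∑ k, z E c k = E := by rw [hzs, min_eq_left hEc]
    have hEc' : E ≤ ∑ k, c' k := by
      refine le_trans hEc (Finset.sum_le_sum fun k _ => ?_)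
      by_cases h : k = i
      · subst h; rw [hc'i]; linarith
      · rw [hc'k k h]
    have hsum' : ∑ k, z E c' k = E := by rw [hzs', min_eq_left hEc']
    by_contra hcon
    push_neg at hcon
    -- z E c' i < z E c i
    have hle1 : z E c i ≤ c i := (hzf2 i ▸ min_le_left _ _)
    have hzi' : z E c' i = lam' * w i := by
      rw [hzf2' i, min_eq_right]
      rw [hzf2' i] at hcon
      rcases min_cases (c' i) (lam' * w i) with ⟨he, h2⟩ | ⟨he, h2⟩
      · exfalso; rw [he, hc'i] at hcon; linarith
      · exact h2.le
    have hlamlt : lam' * w i < lam * w i := by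
      rw [hzi'] at hcon
      exact lt_of_lt_of_le hcon (hzf2 i ▸ min_le_right _ _)
    have hlamlt' : lam' < lam := by
      have := hwpos i
      nlinarith
    have hall : ∀ k ∈ (univ : Finset N), z E c' k ≤ z E c k := by
      intro k _
      by_cases h : k = i
      · subst h; exact hcon.le
      · rw [hzf2 k, hzf2' k, hc'k k h]
        exact min_le_min le_rfl (by nlinarith [hwpos k])
    have : ∑ k, z E c' k < ∑ k, z E c k :=
      Finset.sum_lt_sum hall ⟨i, Finset.mem_univ i, hcon⟩
    rw [hsum, hsum'] at this
    exact lt_irrefl E this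
end

section
/- Let N be a finite set with |N| ≥ 3. There exist an infinite set W of weights and a single rule z such that z is strategy-free^w for every w ∈ W. -/
open Finset MeasureTheory

variable {N : Type*}

section Stmt16Aux
variable [Fintype N] [DecidableEq N]

noncomputable def wfam (a₀ : N) (t : ℝ) : N → ℝ :=
  fun j => (if j = a₀ then t else 1) / ((Fintype.card N : ℝ) - 1 + t)

lemma wfam_denom_pos (hN : 3 ≤ Fintype.card N) {t : ℝ} (ht : 0 < t) :
    0 < (Fintype.card N : ℝ) - 1 + t := by
  have : (3:ℝ) ≤ (Fintype.card N : ℝ) := by exact_mod_cast hN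
  linarith

lemma wfam_pos (a₀ : N) (hN : 3 ≤ Fintype.card N) {t : ℝ} (ht : 0 < t) (j : N) :
    0 < wfam a₀ t j := by
  have hD := wfam_denom_pos (N := N) hN ht
  unfold wfam
  apply div_pos _ hD
  split
  · exact ht
  · norm_num

lemma wfam_sum (a₀ : N) (hN : 3 ≤ Fintype.card N) {t : ℝ} (ht : 0 < t) :
    ∑ j, wfam a₀ t j = 1 := by
  have hD := wfam_denom_pos (N := N) hN ht
  unfold wfam
  rw [← Finset.sum_div, div_eq_one_iff_eq (ne_of_gt hD),
    ← Finset.add_sum_erase _ _ (Finset.mem_univ a₀), if_pos rfl]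
  have h1 : ∀ j ∈ univ.erase a₀, (if j = a₀ then t else (1:ℝ)) = 1 := by
    intro j hj
    rw [if_neg (Finset.ne_of_mem_erase hj)]
  rw [Finset.sum_congr rfl h1, Finset.sum_const, Finset.card_erase_of_mem (Finset.mem_univ a₀),
    Finset.card_univ]
  have h2 : 1 ≤ Fintype.card N := by omega
  have : ((Fintype.card N - 1 : ℕ) : ℝ) = (Fintype.card N : ℝ) - 1 := by
    push_cast [h2]; ring
  rw [nsmul_eq_mul, this]; ring

def goodIdx (a₀ : N) (E : ℝ) (c : N → ℝ) (i : N) : Prop :=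
  ∃ t lam : ℝ, 0 < t ∧ 0 ≤ lam ∧ lam ≤ E ∧ ∀ j, j ≠ i → c j = lam * wfam a₀ t j

open Classical in
noncomputable def theRule (a₀ : N) (E : ℝ) (c : N → ℝ) : N → ℝ :=
  if (∑ k, c k) ≤ E then c
  else if h : ∃ i, goodIdx a₀ E c i then
    (fun j => if j = h.choose then E - ∑ k ∈ univ.erase h.choose, c k else c j)
  else fun j => (E / ∑ k, c k) * c j

lemma sum_erase_eq (a₀ : N) (hN : 3 ≤ Fintype.card N) {lam t : ℝ} (ht : 0 < t)
    {c : N → ℝ} {i : N} (hc : ∀ j, j ≠ i → c j = lam * wfam a₀ t j) :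
    ∑ j ∈ univ.erase i, c j = lam * (1 - wfam a₀ t i) := by
  have h1 : ∑ j ∈ univ.erase i, c j = ∑ j ∈ univ.erase i, lam * wfam a₀ t j :=
    Finset.sum_congr rfl (fun j hj => hc j (Finset.ne_of_mem_erase hj))
  have h2 := Finset.add_sum_erase univ (wfam a₀ t) (Finset.mem_univ i)
  rw [wfam_sum a₀ hN ht] at h2
  rw [h1, ← Finset.mul_sum]
  have h3 : ∑ j ∈ univ.erase i, wfam a₀ t j = 1 - wfam a₀ t i := by linarith
  rw [h3]

lemma no_conflict (a₀ : N) (hN : 3 ≤ Fintype.card N) {E : ℝ} {c : N → ℝ}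
    {i i' : N} (hne : i ≠ i') (hE : E < ∑ k, c k)
    (h1 : goodIdx a₀ E c i) (h2 : goodIdx a₀ E c i') : False := by
  obtain ⟨t, lam, ht, hlam0, hlamE, hc⟩ := h1
  obtain ⟨t', lam', ht', hlam0', hlamE', hc'⟩ := h2
  have hb : ∃ b, b ∈ (univ.erase i).erase i' := by
    apply Finset.card_pos.mp
    rw [Finset.card_erase_of_mem, Finset.card_erase_of_mem (Finset.mem_univ i), Finset.card_univ]
    · omega
    · exact Finset.mem_erase.mpr ⟨hne.symm, Finset.mem_univ i'⟩
  obtain ⟨b, hbmem⟩ := hb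
  have hbi' : b ≠ i' := (Finset.mem_erase.mp hbmem).1
  have hbi : b ≠ i := Finset.ne_of_mem_erase (Finset.mem_of_mem_erase hbmem)
  have hsum : ∑ k, c k = c i + ∑ j ∈ univ.erase i, c j :=
    (Finset.add_sum_erase univ c (Finset.mem_univ i)).symm
  have hsum' : ∑ k, c k = c i' + ∑ j ∈ univ.erase i', c j :=
    (Finset.add_sum_erase univ c (Finset.mem_univ i')).symm
  have hei := sum_erase_eq a₀ hN ht hc
  have hei' := sum_erase_eq a₀ hN ht' hc'
  have key1 : lam * wfam a₀ t i < c i := by nlinarith [hE, hlamE, hsum, hei]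
  have key2 : lam' * wfam a₀ t' i' < c i' := by nlinarith [hE, hlamE', hsum', hei']
  have hci : c i = lam' * wfam a₀ t' i := hc' i hne
  have hci' : c i' = lam * wfam a₀ t i' := hc i' (Ne.symm hne)
  have hcb : lam * wfam a₀ t b = lam' * wfam a₀ t' b := by
    rw [← hc b hbi, hc' b hbi']
  rw [hci] at key1
  rw [hci'] at key2
  by_cases hia : i = a₀
  · have hi'a : i' ≠ a₀ := fun h => hne (hia.trans h.symm)
    have hba : b ≠ a₀ := fun h => hbi (h.trans hia.symm)
    have e1 : wfam a₀ t i' = wfam a₀ t b := by unfold wfam; rw [if_neg hi'a, if_neg hba]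
    have e2 : wfam a₀ t' i' = wfam a₀ t' b := by unfold wfam; rw [if_neg hi'a, if_neg hba]
    rw [e1, e2] at key2
    linarith
  · by_cases hi'a : i' = a₀
    · have hba : b ≠ a₀ := fun h => hbi' (h.trans hi'a.symm)
      have e1 : wfam a₀ t i = wfam a₀ t b := by unfold wfam; rw [if_neg hia, if_neg hba]
      have e2 : wfam a₀ t' i = wfam a₀ t' b := by unfold wfam; rw [if_neg hia, if_neg hba]
      rw [e1, e2] at key1
      linarith
    · have e1 : wfam a₀ t i = wfam a₀ t i' := by unfold wfam; rw [if_neg hia, if_neg hi'a]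
      have e2 : wfam a₀ t' i = wfam a₀ t' i' := by unfold wfam; rw [if_neg hia, if_neg hi'a]
      rw [e1, e2] at key1
      linarith

end Stmt16Aux


/-- There are an infinite set `W` of weights and a single rule that is
strategy-free with respect to every `w ∈ W`. -/
theorem stmt16 [Fintype N] [DecidableEq N] (hN : 3 ≤ Fintype.card N) :
    ∃ (W : Set (N → ℝ)) (z : ℝ → (N → ℝ) → N → ℝ),
      (∀ w ∈ W, IsWeight w) ∧ W.Infinite ∧ IsRule z ∧
      ∀ w ∈ W, StrategyFree z w := by
  have hpos : 0 < Fintype.card N := by omega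
  obtain ⟨a₀⟩ : Nonempty N := Fintype.card_pos_iff.mp hpos
  refine ⟨wfam a₀ '' Set.Ioi 0, theRule a₀, ?_, ?_, ?_, ?_⟩
  · rintro w ⟨t, ht, rfl⟩
    exact ⟨wfam_pos a₀ hN ht, wfam_sum a₀ hN ht⟩
  · have hinj : Set.InjOn (wfam a₀ : ℝ → N → ℝ) (Set.Ioi 0) := by
      intro s hs t ht h
      obtain ⟨b, hb⟩ := Fintype.exists_ne_of_one_lt_card (by omega) a₀
      have hb2 := congrFun h b
      simp only [wfam, if_neg hb] at hb2
      have hDs := wfam_denom_pos (N := N) hN hs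
      have hDt := wfam_denom_pos (N := N) hN ht
      field_simp at hb2
      linarith
    exact (Set.Ioi_infinite 0).image hinj
  · intro E c hE0 hc
    unfold theRule
    split_ifs with hle hgood
    · exact ⟨hc, fun h => absurd hle (not_le.mpr h), fun _ => rfl, fun i => le_refl _⟩
    · obtain ⟨t, lam, ht, hlam0, hlamE, hcc⟩ := hgood.choose_spec
      set i := hgood.choose with hidef
      have hE' : E < ∑ k, c k := not_le.mp hle
      have hereq := sum_erase_eq a₀ hN ht hcc
      have hwpos := wfam_pos a₀ hN ht i
      have herase_le : ∑ j ∈ univ.erase i, c j ≤ E := by nlinarith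
      have hsum : ∑ k, c k = c i + ∑ j ∈ univ.erase i, c j :=
        (Finset.add_sum_erase univ c (Finset.mem_univ i)).symm
      refine ⟨?_, ?_, ?_, ?_⟩
      · intro j
        beta_reduce
        by_cases hj : j = i
        · rw [if_pos hj]
          linarith
        · simp only [if_neg hj]
          exact hc j
      · intro _
        rw [← Finset.add_sum_erase _ _ (Finset.mem_univ i), if_pos rfl]
        have h1 : ∑ j ∈ univ.erase i, (if j = i then E - ∑ k ∈ univ.erase i, c k else c j)
            = ∑ j ∈ univ.erase i, c j :=
          Finset.sum_congr rfl fun j hj => if_neg (Finset.ne_of_mem_erase hj)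
        rw [h1]; ring
      · intro h; exact absurd h hle
      · intro j
        beta_reduce
        by_cases hj : j = i
        · rw [if_pos hj, hj]
          linarith
        · rw [if_neg hj]
    · have hE' : E < ∑ k, c k := not_le.mp hle
      have hSpos : 0 < ∑ k, c k := lt_of_le_of_lt hE0 hE'
      have hdiv : E / (∑ k, c k) ≤ 1 := (div_le_one hSpos).mpr (le_of_lt hE')
      have hdiv0 : 0 ≤ E / (∑ k, c k) := div_nonneg hE0 (le_of_lt hSpos)
      refine ⟨fun j => mul_nonneg hdiv0 (hc j), ?_, fun h => absurd h hle, ?_⟩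
      · intro _
        rw [← Finset.mul_sum]
        exact div_mul_cancel₀ E (ne_of_gt hSpos)
      · intro j
        nlinarith [hc j]
  · rintro w ⟨t, ht, rfl⟩
    intro i lam E ci hlam0 hlamE hci j hj
    have ht' : 0 < t := ht
    set c := Function.update (fun k => lam * wfam a₀ t k) i ci with hcdef
    have hcc : ∀ k, k ≠ i → c k = lam * wfam a₀ t k := by
      intro k hk
      rw [hcdef, Function.update_of_ne hk]
    have hgi : goodIdx a₀ E c i := ⟨t, lam, ht', hlam0, hlamE, hcc⟩
    unfold theRule
    split_ifs with hle hgood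
    · exact hcc j hj
    · have hE' : E < ∑ k, c k := not_le.mp hle
      by_cases hch : hgood.choose = i
      · have hjch : j ≠ hgood.choose := fun h => hj (h.trans hch)
        simp only [if_neg hjch]
        exact hcc j hj
      · exact (no_conflict a₀ hN hch hE' hgood.choose_spec hgi).elim
    · exact absurd ⟨i, hgi⟩ hgood
end

section
/- Let N be a finite set, z a rule, c* ∈ ℝ₊^N, and E ≥ ∑_{i∈N} c*_i. For a family π = (π_i)_{i∈N} of functions π_i: ℝ₊^N → ℝ₊, say that c ∈ ℝ₊^N is a Nash equilibrium of π if for every i ∈ N and every x ∈ ℝ₊, π_i(x, c_{-i}) ≤ π_i(c). Then the following are equivalent: (1) for every family π = (π_i)_{i∈N} of functions π_i: ℝ₊^N → ℝ₊ such that c* is the unique Nash equilibrium of π, the vector c* is a Nash equilibrium of the family (π_i ∘ z^E)_{i∈N}, where z^E(c) = z(E,c); (2) for every i ∈ N and every c_i ≥ E − ∑_{j≠i} c*_j, one has z_j(E, (c_i, c*_{-i})) = c*_j for every j ≠ i. -/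
open Finset MeasureTheory

variable {N : Type*}

/-- `c*` remains a Nash equilibrium of `(πᵢ ∘ z^E)` for every family of
nonnegative payoff functions `π` whose unique Nash equilibrium is `c*` if and only if
`z_{-i}(E, (cᵢ, c*_{-i})) = c*_{-i}` for every `i` and every `cᵢ ≥ E - ∑_{j≠i} c*_j`. -/
theorem stmt17 [Fintype N] [DecidableEq N]
    (z : ℝ → (N → ℝ) → N → ℝ) (hz : IsRule z)
    (cstar : N → ℝ) (hc : ∀ i, 0 ≤ cstar i)
    (E : ℝ) (hE : (∑ i, cstar i) ≤ E) :
    (∀ π : N → (N → ℝ) → ℝ,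
        (∀ (i : N) (c : N → ℝ), (∀ k, 0 ≤ c k) → 0 ≤ π i c) →
        (IsNash π cstar ∧ ∀ c, IsNash π c → c = cstar) →
        IsNash (fun i c => π i (z E c)) cstar)
    ↔ (∀ (i : N) (ci : ℝ), E - ∑ j ∈ univ.erase i, cstar j ≤ ci →
        ∀ j, j ≠ i → z E (Function.update cstar i ci) j = cstar j) := by
  classical
  have hE0 : 0 ≤ E := le_trans (Finset.sum_nonneg fun i _ => hc i) hE
  have hzc : z E cstar = cstar := (hz E cstar hE0 hc).2.2.1 hE
  have hsum : ∀ (k : N) (x : ℝ),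
      ∑ m, Function.update cstar k x m = x + ∑ j ∈ univ.erase k, cstar j := by
    intro k x
    rw [← Finset.add_sum_erase univ _ (mem_univ k), Function.update_self]
    congr 1
    exact Finset.sum_congr rfl fun m hm =>
      Function.update_of_ne (Finset.ne_of_mem_erase hm) _ _
  constructor
  · -- (1) → (2)
    intro H i ci hci j hji
    have hci0 : 0 ≤ ci := by
      have h1 : cstar i + ∑ j ∈ univ.erase i, cstar j = ∑ m, cstar m :=
        Finset.add_sum_erase univ _ (mem_univ i)
      have := hc i
      linarith
    set e : N → (N → ℝ) → ℝ :=
      fun k c => if k = i then (if c j = cstar j then 0 else 2) else 0 with he_def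
    have he_nn : ∀ k c, 0 ≤ e k c := by
      intro k c; dsimp [e]; split_ifs <;> norm_num
    have he_upd : ∀ (k : N) (c : N → ℝ) (x : ℝ),
        e k (Function.update c k x) = e k c := by
      intro k c x
      dsimp [e]
      by_cases hk : k = i
      · subst hk
        rw [Function.update_of_ne hji]
      · simp [hk]
    set π : N → (N → ℝ) → ℝ :=
      fun k c => 1 / (1 + |c k - cstar k|) + e k c with hπ_def
    have hπnn : ∀ (k : N) (c : N → ℝ), (∀ m, 0 ≤ c m) → 0 ≤ π k c := by
      intro k c _
      have h1 : (0:ℝ) < 1 / (1 + |c k - cstar k|) := by positivity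
      have := he_nn k c
      dsimp [π]; linarith
    have haux1 : ∀ a : ℝ, 1 / (1 + |a|) ≤ 1 := by
      intro a
      rw [div_le_one (by positivity)]
      linarith [abs_nonneg a]
    have haux2 : ∀ a : ℝ, (1:ℝ) ≤ 1 / (1 + |a|) → a = 0 := by
      intro a h
      rw [le_div_iff₀ (by positivity), one_mul] at h
      have h2 := abs_nonneg a
      have : |a| = 0 := by linarith
      exact abs_eq_zero.mp this
    have hNash : IsNash π cstar := by
      refine ⟨hc, fun k x hx => ?_⟩
      dsimp only [π]
      rw [he_upd, Function.update_self]
      have h1 : 1 / (1 + |x - cstar k|) ≤ 1 := haux1 _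
      have h2 : cstar k - cstar k = 0 := by ring
      rw [h2, abs_zero]
      have h3 : (1:ℝ) / (1 + 0) = 1 := by norm_num
      rw [h3]
      linarith
    have huniq : ∀ c, IsNash π c → c = cstar := by
      intro c hcN
      funext k
      have h := hcN.2 k (cstar k) (hc k)
      dsimp only [π] at h
      rw [he_upd, Function.update_self] at h
      have h2 : cstar k - cstar k = 0 := by ring
      rw [h2, abs_zero] at h
      have h3 : (1:ℝ) / (1 + 0) = 1 := by norm_num
      rw [h3] at h
      have h4 : (1:ℝ) ≤ 1 / (1 + |c k - cstar k|) := by linarith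
      have := haux2 _ h4
      linarith [this]
    have hmain := (H π hπnn ⟨hNash, huniq⟩).2 i ci hci0
    dsimp only at hmain
    rw [hzc] at hmain
    set d := z E (Function.update cstar i ci) with hd
    by_contra hne
    have hed : e i d = 2 := by
      dsimp [e]; rw [if_pos rfl, if_neg hne]
    have hec : e i cstar = 0 := by
      dsimp [e]; rw [if_pos rfl, if_pos rfl]
    dsimp only [π] at hmain
    rw [hed, hec] at hmain
    have h1 : (0:ℝ) < 1 / (1 + |d i - cstar i|) := by positivity
    have h2 : 1 / (1 + |cstar i - cstar i|) ≤ 1 := haux1 _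
    linarith
  · -- (2) → (1)
    intro P π hπnn ⟨hNash, _⟩
    refine ⟨hc, fun k x hx => ?_⟩
    dsimp only
    rw [hzc]
    have hcu : ∀ m, 0 ≤ Function.update cstar k x m := by
      intro m
      by_cases hm : m = k
      · subst hm; rw [Function.update_self]; exact hx
      · rw [Function.update_of_ne hm]; exact hc m
    by_cases hcase : E - ∑ j ∈ univ.erase k, cstar j ≤ x
    · -- use hypothesis P
      have hP := P k x hcase
      have hznn := (hz E (Function.update cstar k x) hE0 hcu).1
      have hzeq : z E (Function.update cstar k x)
          = Function.update cstar k (z E (Function.update cstar k x) k) := by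
        funext m
        by_cases hm : m = k
        · subst hm; rw [Function.update_self]
        · rw [Function.update_of_ne hm]
          exact hP m hm
      rw [hzeq]
      exact hNash.2 k _ (hznn k)
    · -- z gives back the claims
      push_neg at hcase
      have hsle : ∑ m, Function.update cstar k x m ≤ E := by
        rw [hsum k x]; linarith
      rw [(hz E (Function.update cstar k x) hE0 hcu).2.2.1 hsle]
      exact hNash.2 k x hx
end

section
/- Let N be a finite set with |N| ≥ 3 and let w be a weight. A rule z is strategy-free^w if and only if for every wellformed problem (E,c) and every i ∈ N such that there exists c_i' < c_i with (c_i', c_{-i}) proportional to w (equal to λw for some λ ≥ 0) and E ≥ ∑_{j≠i} c_j + c_i', one has z_j(E,c) = c_j for every j ≠ i. -/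
open Finset MeasureTheory

variable {N : Type*}

/-- `z` is strategy-free with respect to `w` if and only if
`z_{-i}(E, c) = c_{-i}` for every wellformed problem `(E, c)` that is `D`-related to
`w` via the claimant `i`. -/
theorem stmt18 [Fintype N] [DecidableEq N] (hN : 3 ≤ Fintype.card N)
    (w : N → ℝ) (hw : IsWeight w)
    (z : ℝ → (N → ℝ) → N → ℝ) (hz : IsRule z) :
    StrategyFree z w ↔
      ∀ (E : ℝ) (c : N → ℝ), 0 ≤ E → (∀ k, 0 ≤ c k) → E ≤ ∑ k, c k →
        ∀ i : N,
          (∃ ci' : ℝ, ci' < c i ∧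
            (∃ lam : ℝ, 0 ≤ lam ∧ Function.update c i ci' = fun k => lam * w k) ∧
            (∑ j ∈ univ.erase i, c j) + ci' ≤ E) →
          ∀ j, j ≠ i → z E c j = c j := by
  obtain ⟨hwpos, hwsum⟩ := hw
  have hsumw : ∀ i : N, ∑ j ∈ univ.erase i, w j = 1 - w i := by
    intro i
    have h := Finset.sum_erase_add univ w (mem_univ i)
    rw [hwsum] at h
    linarith
  constructor
  · rintro hsf E c hE hc hEc i ⟨ci', hlt, ⟨lam, hlam, hupd⟩, hsum⟩ j hji
    have hcj : ∀ k, k ≠ i → c k = lam * w k := by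
      intro k hk
      have h := congrFun hupd k
      simpa [Function.update, hk] using h
    have hci' : ci' = lam * w i := by
      have h := congrFun hupd i
      simpa [Function.update] using h
    have hceq : Function.update (fun k => lam * w k) i (c i) = c := by
      funext k
      by_cases hk : k = i
      · simp [hk, Function.update]
      · simp [Function.update, hk, hcj k hk]
    have hsumc : ∑ k ∈ univ.erase i, c k = lam * (1 - w i) := by
      rw [Finset.sum_congr rfl (fun k hk => hcj k (Finset.ne_of_mem_erase hk)),
        ← Finset.mul_sum, hsumw]
    have hlamE : lam ≤ E := by nlinarith [hsum, hsumc, hci']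
    have hciE : E - lam * ∑ j ∈ univ.erase i, w j ≤ c i := by
      have h := Finset.sum_erase_add univ c (mem_univ i)
      rw [hsumw]
      nlinarith [hEc, hsumc]
    have := hsf i lam E (c i) hlam hlamE hciE j hji
    rw [hceq] at this
    rw [this, hcj j hji]
  · intro h i lam E ci hlam hlamE hci j hji
    set c := Function.update (fun k => lam * w k) i ci with hc
    have hcj : ∀ k, k ≠ i → c k = lam * w k := by
      intro k hk; simp [hc, Function.update, hk]
    have hcii : c i = ci := by simp [hc]
    have hE : 0 ≤ E := le_trans hlam hlamE
    rw [hsumw] at hci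
    have hcilb : lam * w i ≤ ci := by nlinarith
    have hck : ∀ k, 0 ≤ c k := by
      intro k
      by_cases hk : k = i
      · rw [hk, hcii]
        linarith [mul_nonneg hlam (hwpos i).le, hcilb]
      · rw [hcj k hk]; exact mul_nonneg hlam (hwpos k).le
    have hsumc : ∑ k ∈ univ.erase i, c k = lam * (1 - w i) := by
      rw [Finset.sum_congr rfl (fun k hk => hcj k (Finset.ne_of_mem_erase hk)),
        ← Finset.mul_sum, hsumw]
    have hsumall := Finset.sum_erase_add univ c (mem_univ i)
    have hEc : E ≤ ∑ k, c k := by nlinarith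
    rcases eq_or_lt_of_le hcilb with heq | hgt
    · -- ci = lam * w i : total claim is lam ≤ E, rule honors all claims
      have hle : (∑ k, c k) ≤ E := by nlinarith
      have := (hz E c hE hck).2.2.1 hle
      rw [congrFun this j, hcj j hji]
    · have hupd : Function.update c i (lam * w i) = fun k => lam * w k := by
        funext k
        by_cases hk : k = i
        · simp [hk, Function.update]
        · simp [Function.update, hk, hcj k hk]
      have hsum2 : (∑ k ∈ univ.erase i, c k) + lam * w i ≤ E := by nlinarith
      have := h E c hE hck hEc i
        ⟨lam * w i, by rw [hcii]; exact hgt, ⟨lam, hlam, hupd⟩, hsum2⟩ j hji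
      rw [this, hcj j hji]
end

section
/- Let N be a finite set with |N| ≥ 3 and let P^u be a separable directional rule that is homogeneous. Then for every c ∈ ℝ₊^N and every α > 0, the vectors (u_i(c_i))_{i∈N} and (u_i(αc_i))_{i∈N} are proportional, i.e., there exists μ > 0 such that u_i(αc_i) = μ u_i(c_i) for all i ∈ N. -/
open Finset MeasureTheory

variable {N : Type*}

/-- If a separable directional rule `P^u` is homogeneous, then for every
nonnegative claims vector `c` and every `α > 0` the vectors `(uᵢ(cᵢ))ᵢ` and
`(uᵢ(αcᵢ))ᵢ` are proportional. -/
theorem stmt19 [Fintype N] (hN : 3 ≤ Fintype.card N)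
    (u : N → ℝ → ℝ) (z : ℝ → (N → ℝ) → N → ℝ)
    (hz : IsRule z) (hsep : IsSepDir u z) (hhom : Homogeneous z)
    (c : N → ℝ) (hc : ∀ i, 0 ≤ c i) (α : ℝ) (hα : 0 < α) :
    ∃ μ : ℝ, 0 < μ ∧ ∀ i, u i (α * c i) = μ * u i (c i) := by
  classical
  obtain ⟨hu0, hupos, hsep'⟩ := hsep
  by_cases hc0 : ∀ i, c i = 0
  · exact ⟨1, one_pos, fun i => by simp [hc0 i, hu0 i]⟩
  push_neg at hc0
  obtain ⟨i0, hi0⟩ := hc0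
  have hi0pos : 0 < c i0 := lt_of_le_of_ne (hc i0) (Ne.symm hi0)
  set S : Finset N := Finset.univ.filter (fun i => 0 < c i) with hS
  have hSne : S.Nonempty := ⟨i0, by simp [hS, hi0pos]⟩
  set m : ℝ := S.inf' hSne c with hm
  have hmpos : 0 < m := by
    rw [hm, Finset.lt_inf'_iff]
    intro b hb; exact (Finset.mem_filter.mp hb).2
  set E : ℝ := m / 2 with hE
  have hEpos : 0 < E := by positivity
  have hmle : m ≤ ∑ i, c i := by
    calc m ≤ c i0 := Finset.inf'_le c (by simp [hS, hi0pos])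
    _ ≤ ∑ i, c i := Finset.single_le_sum (fun j _ => hc j) (Finset.mem_univ i0)
  have hEle : E ≤ ∑ i, c i := le_trans (by linarith) hmle
  have hunn : ∀ j, 0 ≤ u j (c j) := by
    intro j
    rcases eq_or_lt_of_le (hc j) with h | h
    · rw [← h, hu0]
    · exact (hupos j _ h).le
  obtain ⟨lam, hlam0, hlamval, hlamsum⟩ := hsep' E c hEpos.le hc
  rw [min_eq_left hEle] at hlamsum
  have hznn : ∀ j, 0 ≤ z E c j := fun j => by
    rw [hlamval j]; exact le_min (hc j) (mul_nonneg hlam0 (hunn j))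
  have hlampos : 0 < lam := by
    rcases eq_or_lt_of_le hlam0 with h | h
    · exfalso
      have hz0 : ∀ j, z E c j = 0 := fun j => by
        rw [hlamval j, ← h]; simp [min_eq_right (hc j)]
      rw [Finset.sum_congr rfl (fun j _ => hz0 j)] at hlamsum
      simp at hlamsum; linarith
    · exact h
  have hzlt : ∀ i ∈ S, z E c i < c i := by
    intro i hi
    have h1 : z E c i ≤ E := by
      have := Finset.single_le_sum (fun j _ => hznn j) (Finset.mem_univ i)
      rwa [hlamsum] at this
    have h2 : E < c i := by
      have := Finset.inf'_le c hi
      rw [hE] at *; linarith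
    linarith
  have hzval : ∀ i ∈ S, z E c i = lam * u i (c i) := by
    intro i hi
    rcases min_cases (c i) (lam * u i (c i)) with ⟨h, _⟩ | ⟨h, _⟩
    · exfalso; have := hzlt i hi; rw [hlamval i, h] at this; linarith
    · rw [hlamval i, h]
  -- second problem
  have hαc : ∀ i, 0 ≤ α * c i := fun i => mul_nonneg hα.le (hc i)
  obtain ⟨lam', hlam'0, hlam'val, hlam'sum⟩ :=
    hsep' (α * E) (fun i => α * c i) (by positivity) hαc
  have hsumα : (∑ i, α * c i) = α * ∑ i, c i := by rw [Finset.mul_sum]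
  rw [hsumα, min_eq_left (mul_le_mul_of_nonneg_left hEle hα.le)] at hlam'sum
  have hhomeq := hhom E c hEpos.le hc hEle α hα
  have hzα : ∀ j, z (α * E) (fun i => α * c i) j = α * z E c j := by
    intro j; rw [hhomeq]
  have hlam'pos : 0 < lam' := by
    rcases eq_or_lt_of_le hlam'0 with h | h
    · exfalso
      have hz0 : ∀ j, z (α * E) (fun i => α * c i) j = 0 := fun j => by
        rw [hlam'val j, ← h]; simp [min_eq_right (hαc j)]
      rw [Finset.sum_congr rfl (fun j _ => hz0 j)] at hlam'sum
      simp at hlam'sum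
      rcases hlam'sum with h' | h' <;> linarith
    · exact h
  have hkey : ∀ i ∈ S, lam' * u i (α * c i) = α * (lam * u i (c i)) := by
    intro i hi
    have hlt : z (α * E) (fun k => α * c k) i < α * c i := by
      rw [hzα i]
      exact mul_lt_mul_of_pos_left (hzlt i hi) hα
    rcases min_cases (α * c i) (lam' * u i (α * c i)) with ⟨h, _⟩ | ⟨h, _⟩
    · exfalso; rw [hlam'val i, h] at hlt; linarith
    · have := hlam'val i
      rw [h] at this
      rw [← this, hzα i, hzval i hi]
  refine ⟨α * lam / lam', by positivity, fun i => ?_⟩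
  by_cases hi : i ∈ S
  · have := hkey i hi
    field_simp
    linarith [this]
  · have hci : c i = 0 := by
      by_contra h
      exact hi (Finset.mem_filter.mpr ⟨Finset.mem_univ i, lt_of_le_of_ne (hc i) (Ne.symm h)⟩)
    simp [hci, hu0 i]
end
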